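/- arXiv:math/0001157 — 8 statements merged into one kernel-verified Lean document; each statement's English description precedes it below -/
import Mathlib

section
/- The relation of being an ℵ₀-ideal subalgebra is transitive: if A is an ℵ₀-ideal subalgebra of B and B is an ℵ₀-ideal subalgebra of C, then A is an ℵ₀-ideal subalgebra of C. -/
/-- `A` is a (Boolean) subalgebra of the ambient Boolean algebra. -/
def IsSubalg {B : Type*} [BooleanAlgebra B] (A : Set B) : Prop :=
  ⊥ ∈ A ∧ ⊤ ∈ A ∧ (∀ x ∈ A, ∀ y ∈ A, x ⊔ y ∈ A) ∧ (∀ x ∈ A, ∀ y ∈ A, x ⊓ y ∈ A) ∧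
    ∀ x ∈ A, xᶜ ∈ A

/-- `A` is ℵ₀-ideal relative to `S`: for every `b ∈ S \ A` the ideal
`{a ∈ A : a ≤ b}` has a countable cofinal subset. -/
def Aleph0IdealIn {B : Type*} [BooleanAlgebra B] (A S : Set B) : Prop :=
  ∀ b ∈ S, b ∉ A → ∃ C : Set B, C.Countable ∧ C ⊆ A ∧ (∀ c ∈ C, c ≤ b) ∧
    ∀ a ∈ A, a ≤ b → ∃ c ∈ C, a ≤ c

/-- `A` is an ℵ₀-ideal subalgebra of the whole algebra. -/
def Aleph0Ideal {B : Type*} [BooleanAlgebra B] (A : Set B) : Prop :=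
  Aleph0IdealIn A Set.univ

/-- Transitivity of the relation "is an ℵ₀-ideal subalgebra of":
if `A` is an ℵ₀-ideal subalgebra of `B` and `B` is an ℵ₀-ideal subalgebra of `C`,
then `A` is an ℵ₀-ideal subalgebra of `C`. -/
theorem aleph0Ideal_trans {C : Type*} [BooleanAlgebra C] (A B : Set C)
    (hAB : A ⊆ B) (hA : IsSubalg A) (hB : IsSubalg B)
    (h1 : Aleph0IdealIn A B) (h2 : Aleph0Ideal B) :
    Aleph0Ideal A := by
  intro b _ hbA
  by_cases hbB : b ∈ B
  · exact h1 b hbB hbA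
  · obtain ⟨D, hDc, hDB, hDle, hDcof⟩ := h2 b (Set.mem_univ b) hbB
    have key : ∀ d ∈ D, ∃ E : Set C, E.Countable ∧ E ⊆ A ∧ (∀ e ∈ E, e ≤ d) ∧
        ∀ a ∈ A, a ≤ d → ∃ e ∈ E, a ≤ e := by
      intro d hd
      by_cases hdA : d ∈ A
      · exact ⟨{d}, Set.countable_singleton d, by simpa,
          by simp, fun a _ hale => ⟨d, Set.mem_singleton d, hale⟩⟩
      · exact h1 d (hDB hd) hdA
    choose E hEc hEA hEle hEcof using key
    have : D.Countable := hDc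
    haveI : Countable D := hDc.to_subtype
    refine ⟨⋃ d : D, E d d.2, Set.countable_iUnion (fun d => hEc d d.2), ?_, ?_, ?_⟩
    · intro x hx
      obtain ⟨d, hd⟩ := Set.mem_iUnion.mp hx
      exact hEA d d.2 hd
    · intro c hc
      obtain ⟨d, hd⟩ := Set.mem_iUnion.mp hc
      exact le_trans (hEle d d.2 c hd) (hDle d d.2)
    · intro a haA hab
      obtain ⟨d, hdD, had⟩ := hDcof a (hAB haA) hab
      obtain ⟨e, heE, hae⟩ := hEcof d hdD a haA had
      exact ⟨e, Set.mem_iUnion.mpr ⟨⟨d, hdD⟩, heE⟩, hae⟩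
end

section
/- If F : B → [B]^{≤ℵ₀} witnesses the weak Freese-Nation property of a Boolean algebra B, then every subalgebra A of B that is closed under F (i.e., F(a) ⊆ A for all a ∈ A) is an ℵ₀-ideal subalgebra of B. -/
/-- If `F` witnesses the weak Freese–Nation property of `B`, then every subalgebra of `B`
closed under `F` is an ℵ₀-ideal subalgebra of `B`. -/
theorem wfn_closed_aleph0Ideal {B : Type*} [BooleanAlgebra B]
    (F : B → Set B) (hFc : ∀ p, (F p).Countable)
    (hF : ∀ p q : B, p ≤ q → ∃ r, r ∈ F p ∧ r ∈ F q ∧ p ≤ r ∧ r ≤ q)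
    (A : Set B) (hA : IsSubalg A) (hcl : ∀ a ∈ A, F a ⊆ A) :
    Aleph0Ideal A := by
  intro b _ hb
  refine ⟨{c ∈ F b | c ∈ A ∧ c ≤ b}, (hFc b).mono (Set.sep_subset _ _), fun c hc => hc.2.1,
    fun c hc => hc.2.2, fun a ha hab => ?_⟩
  obtain ⟨r, hra, hrb, har, hrb'⟩ := hF a b hab
  exact ⟨r, ⟨hrb, hcl a ha hra, hrb'⟩, har⟩
end

section
/- The cardinal 𝔡 equals 𝔡₂, where 𝔡₂ is the minimum of |A| + |D| over all pairs (A, D) with A ⊆ [ω]^ω and D ⊆ ω^ω such that D dominates on A. -/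
/-- The dominating number `𝔡`: the least cardinality of a family of functions that
eventually dominates every function `ℕ → ℕ`. -/
noncomputable def dNum : Cardinal :=
  sInf {κ | ∃ D : Set (ℕ → ℕ), Cardinal.mk D = κ ∧
    ∀ g : ℕ → ℕ, ∃ d ∈ D, ∀ᶠ n in Filter.atTop, g n < d n}

/-- Van Douwen's cardinal `𝔡₂`: the minimum of `|A| + |D|` over pairs with
`A ⊆ [ω]^ω`, `D ⊆ ω^ω`, such that `D` dominates on `A`. -/
noncomputable def d2Num : Cardinal :=
  sInf {κ | ∃ (A : Set (Set ℕ)) (D : Set (ℕ → ℕ)), (∀ a ∈ A, a.Infinite) ∧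
    Cardinal.mk A + Cardinal.mk D = κ ∧
    ∀ g : ℕ → ℕ, ∃ d ∈ D, ∃ a ∈ A, ∀ n ∈ a, g n < d n}

/-- the next element of `a` that is `≥ n` (junk value `0` if none). -/
noncomputable def nxt (a : Set ℕ) (n : ℕ) : ℕ :=
  @dite _ (∃ m, m ∈ a ∧ n ≤ m) (Classical.dec _) (fun h => h.choose) fun _ => 0

lemma nxt_mem {a : Set ℕ} (ha : a.Infinite) (n : ℕ) : nxt a n ∈ a ∧ n ≤ nxt a n := by
  have h : ∃ m, m ∈ a ∧ n ≤ m := by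
    obtain ⟨m, hm, hlt⟩ := ha.exists_gt n
    exact ⟨m, hm, hlt.le⟩
  rw [nxt]
  rw [dif_pos h]
  exact h.choose_spec

lemma dNum_set_nonempty :
    {κ | ∃ D : Set (ℕ → ℕ), Cardinal.mk D = κ ∧
      ∀ g : ℕ → ℕ, ∃ d ∈ D, ∀ᶠ n in Filter.atTop, g n < d n}.Nonempty := by
  refine ⟨_, Set.univ, rfl, fun g => ⟨fun n => g n + 1, Set.mem_univ _, ?_⟩⟩
  exact Filter.Eventually.of_forall fun n => Nat.lt_succ_self _

lemma aleph0_le_dNum : Cardinal.aleph0 ≤ dNum := by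
  refine le_csInf dNum_set_nonempty ?_
  rintro κ ⟨D, rfl, hD⟩
  by_contra hlt
  push_neg at hlt
  have hfin : D.Finite := by
    rw [Cardinal.lt_aleph0_iff_set_finite] at hlt
    exact hlt
  obtain ⟨d, hd, hev⟩ := hD (fun n => hfin.toFinset.sup (fun d => d n) + 1)
  obtain ⟨n, hn⟩ := hev.exists

  have h2 : d n ≤ hfin.toFinset.sup (fun d => d n) :=
    Finset.le_sup (f := fun d => d n) (hfin.mem_toFinset.2 hd)
  exact absurd (lt_of_lt_of_le (Nat.lt_of_succ_lt hn) h2) (lt_irrefl _)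

lemma d2Num_le_dNum : d2Num ≤ dNum := by
  obtain ⟨D, hDeq, hD⟩ := csInf_mem dNum_set_nonempty
  have h1 : d2Num ≤ Cardinal.mk (Set.range (Set.Ici : ℕ → Set ℕ)) + Cardinal.mk D := by
    apply csInf_le'
    refine ⟨Set.range Set.Ici, D, ?_, rfl, ?_⟩
    · rintro a ⟨n, rfl⟩
      exact Set.Ici_infinite n
    · intro g
      obtain ⟨d, hd, hev⟩ := hD g
      obtain ⟨N, hN⟩ := Filter.eventually_atTop.1 hev
      exact ⟨d, hd, Set.Ici N, ⟨N, rfl⟩, fun n hn => hN n hn⟩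
  have h2 : Cardinal.mk (Set.range (Set.Ici : ℕ → Set ℕ)) ≤ Cardinal.aleph0 := by
    have := Cardinal.mk_range_le (f := (Set.Ici : ℕ → Set ℕ))
    simpa using this
  calc d2Num ≤ Cardinal.mk (Set.range (Set.Ici : ℕ → Set ℕ)) + Cardinal.mk D := h1
    _ ≤ Cardinal.aleph0 + Cardinal.mk D := by gcongr
    _ = Cardinal.mk D := Cardinal.add_eq_right (hDeq ▸ aleph0_le_dNum) (hDeq ▸ aleph0_le_dNum)
    _ = dNum := hDeq

lemma d2Num_set_nonempty :
    {κ | ∃ (A : Set (Set ℕ)) (D : Set (ℕ → ℕ)), (∀ a ∈ A, a.Infinite) ∧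
      Cardinal.mk A + Cardinal.mk D = κ ∧
      ∀ g : ℕ → ℕ, ∃ d ∈ D, ∃ a ∈ A, ∀ n ∈ a, g n < d n}.Nonempty := by
  refine ⟨_, {Set.univ}, Set.univ, ?_, rfl, ?_⟩
  · rintro a rfl
    exact Set.infinite_univ
  · intro g
    exact ⟨fun n => g n + 1, Set.mem_univ _, Set.univ, rfl, fun n _ => Nat.lt_succ_self _⟩

lemma dNum_le_d2Num : dNum ≤ d2Num := by
  obtain ⟨A, D, hAinf, heq, hdom⟩ := csInf_mem d2Num_set_nonempty
  set f : ↥D × ↥A → (ℕ → ℕ) := fun p n => (p.1 : ℕ → ℕ) (nxt (p.2 : Set ℕ) n) with hf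
  have h1 : dNum ≤ Cardinal.mk (Set.range f) := by
    apply csInf_le'
    refine ⟨Set.range f, rfl, ?_⟩
    intro g
    set G : ℕ → ℕ := fun n => (Finset.Iic n).sup g with hG
    obtain ⟨d, hd, a, ha, hda⟩ := hdom G
    refine ⟨f (⟨d, hd⟩, ⟨a, ha⟩), Set.mem_range_self _, Filter.Eventually.of_forall fun n => ?_⟩
    obtain ⟨hmem, hle⟩ := nxt_mem (hAinf a ha) n
    have hgG : g n ≤ G (nxt a n) := Finset.le_sup (Finset.mem_Iic.2 hle)
    exact lt_of_le_of_lt hgG (hda _ hmem)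
  have h2 : Cardinal.mk (Set.range f) ≤ Cardinal.mk D * Cardinal.mk A := by
    calc Cardinal.mk (Set.range f) ≤ Cardinal.mk (↥D × ↥A) := Cardinal.mk_range_le
      _ = Cardinal.mk D * Cardinal.mk A := by simp [Cardinal.mk_prod]
  rcases lt_or_ge (Cardinal.mk A + Cardinal.mk D) Cardinal.aleph0 with hfin | hinf
  · exfalso
    have hA : Cardinal.mk A < Cardinal.aleph0 := lt_of_le_of_lt (self_le_add_right _ _) hfin
    have hDc : Cardinal.mk D < Cardinal.aleph0 := lt_of_le_of_lt (self_le_add_left _ _) hfin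
    have : Cardinal.mk D * Cardinal.mk A < Cardinal.aleph0 := Cardinal.mul_lt_aleph0 hDc hA
    exact absurd (lt_of_le_of_lt (h1.trans h2) this) (not_lt.2 aleph0_le_dNum)
  · have h3 : Cardinal.mk D * Cardinal.mk A ≤ Cardinal.mk A + Cardinal.mk D := by
      refine (Cardinal.mul_le_max _ _).trans ?_
      refine max_le (max_le (self_le_add_left _ _) (self_le_add_right _ _)) hinf
    exact le_of_le_of_eq (h1.trans (h2.trans h3)) heq

/-- Van Douwen's theorem: `𝔡 = 𝔡₂`. -/
theorem dNum_eq_d2Num : dNum = d2Num :=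
  le_antisymm dNum_le_d2Num d2Num_le_dNum
end

section
/- 𝔪𝔠 = min(𝔯, 𝔡), where 𝔪𝔠 = 𝔪𝔠(P(ω)/fin), 𝔯 is the reaping number and 𝔡 is the dominating number. -/
open scoped symmDiff

instance booleanRingQuotient {R : Type*} [BooleanRing R] (I : Ideal R) :
    BooleanRing (R ⧸ I) where
  isIdempotentElem a := by
    obtain ⟨x, rfl⟩ := Ideal.Quotient.mk_surjective a
    show _ * _ = _
    rw [← map_mul]; exact congrArg _ (BooleanRing.mul_self x)

/-- The ideal of finite sets, as a ring ideal of the Boolean ring `AsBoolRing (Set α)`. -/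
def finSetIdeal (α : Type*) : Ideal (AsBoolRing (Set α)) where
  carrier := {s | (ofBoolRing s).Finite}
  zero_mem' := by simp [ofBoolRing_zero]
  add_mem' := by
    intro a b ha hb
    have h : (ofBoolRing (a + b) : Set α) = ofBoolRing a ∆ ofBoolRing b := ofBoolRing_add a b
    show (ofBoolRing (a + b)).Finite
    rw [h]
    refine Set.Finite.subset (Set.Finite.union ha hb) ?_
    rintro x (h1 | h1)
    · exact Or.inl h1.1
    · exact Or.inr h1.1
  smul_mem' := by
    intro c x hx
    have h : (ofBoolRing (c * x) : Set α) = ofBoolRing c ⊓ ofBoolRing x := ofBoolRing_mul c x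
    show (ofBoolRing (c • x)).Finite
    rw [smul_eq_mul, h]
    exact Set.Finite.subset hx Set.inter_subset_right

/-- The Boolean algebra `P(α)/fin`. -/
abbrev PowFin (α : Type*) : Type _ := AsBoolAlg ((AsBoolRing (Set α)) ⧸ finSetIdeal α)

/-- The classical reaping number `𝔯`: the least size of a family of infinite subsets of
`ℕ` that no single `b ⊆ ω` splits (reaps). -/
noncomputable def rNum : Cardinal :=
  sInf {κ | ∃ R : Set (Set ℕ), (∀ x ∈ R, x.Infinite) ∧ Cardinal.mk R = κ ∧
    ¬ ∃ b : Set ℕ, ∀ r ∈ R, (b ∩ r).Infinite ∧ (r \ b).Infinite}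

/-- `A` is ℵ₀-ideal complete in `B`. -/
def IdealComplete {B : Type*} [BooleanAlgebra B] (A : Set B) : Prop :=
  ∀ S T : Set B, S ⊆ A → T ⊆ A → S.Countable → T.Countable →
    (∀ s ∈ S, ∀ t ∈ T, s ⊓ t = ⊥) →
    ∃ b : B,
      (∀ a ∈ A, (a ≤ b ↔ ∃ F : Finset B, ↑F ⊆ S ∧ a ≤ F.sup id)) ∧
      (∀ a ∈ A, (a ⊓ b = ⊥ ↔ ∃ F : Finset B, ↑F ⊆ T ∧ a ≤ F.sup id))

/-- `𝔪𝔠(B)`: the least cardinality of a subset of `B` that is not ℵ₀-ideal complete. -/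
noncomputable def mcB (B : Type*) [BooleanAlgebra B] : Cardinal :=
  sInf {κ | ∃ A : Set B, Cardinal.mk A = κ ∧ ¬ IdealComplete A}

/-!
The upper bounds come from two families that are not ℵ₀-ideal complete: the image of an
unsplittable family (with `S = T = ∅`), and the columns of `ℕ × ℕ` together with the epigraphs
of a dominating family (with `S` the set of columns and `T = ∅`).

Conversely, let `|A| < min(𝔯, 𝔡)` and let `S, T ⊆ A` be countable and orthogonal. The ideals
they generate are generated by increasing towers `σ n`, `τ n` of subsets of `ℕ` with `σ n ∩ τ n`
finite, and some `W` almost contains every `σ n` and is almost disjoint from every `τ m`.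
The key step handles a single tower `τ`: a function `g` not dominated by the `|A|` functions
`k ↦ (a point of a \ τ k above k)` gives the set `E = {y | ∃ n, y ≤ g n ∧ y ∉ τ n}`, which is
almost disjoint from every `τ m` but meets every `a` with all `a \ τ k` infinite in an infinite
set; a set `b` splitting all these traces `a ∩ E` then yields `C = E ∩ b`, almost disjoint from
the tower and splitting every such `a`. With `C_σ` built from the traces of `A` on `W` and `C_τ`
from those off `W`, the set `(W \ C_σ) ∪ (C_τ \ W)` witnesses ℵ₀-ideal completeness.
-/

open Set Cardinal
open Filter (atTop eventually_atTop)

def finQuot (α : Type*) : BoundedLatticeHom (Set α) (PowFin α) :=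
  (Ideal.Quotient.mk (finSetIdeal α)).asBoolAlg.comp
    (OrderIso.asBoolAlgAsBoolRing (Set α)).symm

section finQuot

variable {α : Type*} {s t : Set α}

theorem finQuot_surjective : Function.Surjective (finQuot α) := fun x ↦
  (Ideal.Quotient.mk_surjective (ofBoolAlg x)).imp fun _ h ↦ congrArg toBoolAlg h

theorem finQuot_eq_bot_iff : finQuot α s = ⊥ ↔ s.Finite :=
  Ideal.Quotient.eq_zero_iff_mem

theorem finQuot_le_finQuot_iff : finQuot α s ≤ finQuot α t ↔ (s \ t).Finite := by
  rw [← sdiff_eq_bot_iff, ← map_sdiff', finQuot_eq_bot_iff]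

theorem finQuot_inf_eq_bot_iff : finQuot α s ⊓ finQuot α t = ⊥ ↔ (s ∩ t).Finite := by
  rw [← InfHomClass.map_inf]; exact finQuot_eq_bot_iff

theorem exists_monotone_finQuot_comp_eq {u : ℕ → PowFin α} (hu : Monotone u) :
    ∃ σ : ℕ → Set α, Monotone σ ∧ finQuot α ∘ σ = u := by
  choose rep hrep using finQuot_surjective (α := α)
  refine ⟨partialSups (rep ∘ u), (partialSups _).monotone, funext fun n ↦ ?_⟩
  rw [Function.comp_apply, ← map_partialSups]
  simp only [Function.comp_apply, hrep, hu.partialSups_eq]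

end finQuot

section OrderIdeal

variable {α : Type*} [SemilatticeSup α] [OrderBot α]

theorem exists_sup_le_of_monotone {S : Set α} {v : ℕ → α} (hv : Monotone v)
    (hS : ∀ s ∈ S, ∃ n, s ≤ v n) {F : Finset α} (hF : ↑F ⊆ S) : ∃ N, F.sup id ≤ v N := by
  choose! n hn using hS
  exact ⟨F.sup n, Finset.sup_le fun s hs ↦ (hn s (hF hs)).trans (hv (Finset.le_sup hs))⟩

theorem Set.Countable.exists_monotone_generating {S : Set α} (hS : S.Countable) :
    ∃ u : ℕ → α, Monotone u ∧
      ∀ a, (∃ F : Finset α, ↑F ⊆ S ∧ a ≤ F.sup id) ↔ ∃ n, a ≤ u n := by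
  classical
  rcases S.eq_empty_or_nonempty with rfl | hne
  · exact ⟨fun _ ↦ ⊥, monotone_const, fun a ↦ by simp [Set.subset_empty_iff]⟩
  obtain ⟨f, rfl⟩ := hS.exists_eq_range hne
  refine ⟨partialSups f, (partialSups f).monotone, fun a ↦ ⟨?_, ?_⟩⟩
  · rintro ⟨F, hF, ha⟩
    obtain ⟨N, hN⟩ := exists_sup_le_of_monotone (partialSups f).monotone
      (forall_mem_range.2 fun n ↦ ⟨n, le_partialSups f n⟩) hF
    exact ⟨N, ha.trans hN⟩
  · rintro ⟨n, ha⟩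
    refine ⟨(Finset.range (n + 1)).image f, by simp, ?_⟩
    rwa [Finset.sup_image, Function.id_comp, ← partialSups_eq_sup_range]

end OrderIdeal

section CardinalCharacteristics

theorem exists_unsplittable_mk_eq_rNum :
    ∃ R : Set (Set ℕ), (∀ r ∈ R, r.Infinite) ∧ #R = rNum ∧
      ¬ ∃ b : Set ℕ, ∀ r ∈ R, (b ∩ r).Infinite ∧ (r \ b).Infinite := by
  have hne : {κ | ∃ R : Set (Set ℕ), (∀ r ∈ R, r.Infinite) ∧ #R = κ ∧
      ¬ ∃ b : Set ℕ, ∀ r ∈ R, (b ∩ r).Infinite ∧ (r \ b).Infinite}.Nonempty := by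
    refine ⟨_, {r | r.Infinite}, fun r hr ↦ hr, rfl, fun ⟨b, hb⟩ ↦ ?_⟩
    rcases infinite_union.1 (show (b ∪ bᶜ).Infinite by simpa using infinite_univ) with hb' | hb'
    · simpa using (hb b hb').2
    · simpa using (hb bᶜ hb').1
  exact csInf_mem hne

theorem exists_dominating_mk_eq_dNum :
    ∃ D : Set (ℕ → ℕ), #D = dNum ∧ ∀ g : ℕ → ℕ, ∃ d ∈ D, ∀ᶠ n in atTop, g n < d n := by
  have hne : {κ | ∃ D : Set (ℕ → ℕ), #D = κ ∧
      ∀ g : ℕ → ℕ, ∃ d ∈ D, ∀ᶠ n in atTop, g n < d n}.Nonempty :=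
    ⟨_, univ, rfl, fun g ↦ ⟨g + 1, mem_univ _, .of_forall fun n ↦ Nat.lt_succ_self _⟩⟩
  exact csInf_mem hne

theorem exists_splitting_of_mk_lt_rNum {R : Set (Set ℕ)} (hR : ∀ r ∈ R, r.Infinite)
    (h : #R < rNum) : ∃ b : Set ℕ, ∀ r ∈ R, (b ∩ r).Infinite ∧ (r \ b).Infinite := by
  by_contra hb
  exact h.not_ge (csInf_le' ⟨R, hR, rfl, hb⟩)

theorem exists_not_dominated_of_mk_lt_dNum {D : Set (ℕ → ℕ)} (h : #D < dNum) :
    ∃ g : ℕ → ℕ, ∀ d ∈ D, ∃ᶠ n in atTop, d n ≤ g n := by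
  by_contra! hD
  exact h.not_ge (csInf_le' ⟨D, rfl, fun g ↦ by simpa using hD g⟩)

theorem infinite_of_dominating {D : Set (ℕ → ℕ)}
    (hD : ∀ g : ℕ → ℕ, ∃ d ∈ D, ∀ᶠ n in atTop, g n < d n) : D.Infinite := by
  intro hfin
  obtain ⟨d, hd, hlt⟩ := hD fun n ↦ hfin.toFinset.sup (· n)
  obtain ⟨n, hn⟩ := hlt.exists
  exact hn.not_ge (Finset.le_sup (f := (· n)) (hfin.mem_toFinset.2 hd))

end CardinalCharacteristics

section mcB

variable {B : Type*} [BooleanAlgebra B]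

theorem mcB_le_mk {A : Set B} (hA : ¬ IdealComplete A) : mcB B ≤ #A :=
  csInf_le' ⟨A, rfl, hA⟩

theorem le_mcB {κ : Cardinal} (hne : ∃ A : Set B, ¬ IdealComplete A)
    (h : ∀ A : Set B, #A < κ → IdealComplete A) : κ ≤ mcB B := by
  obtain ⟨A, hA⟩ := hne
  refine le_csInf ⟨_, A, rfl, hA⟩ ?_
  rintro _ ⟨A, rfl, hA⟩
  exact not_lt.1 fun hlt ↦ hA (h A hlt)

end mcB

section UpperBounds

theorem not_idealComplete_image_finQuot {α : Type*} {R : Set (Set α)}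
    (hR : ∀ r ∈ R, r.Infinite)
    (hsplit : ¬ ∃ b : Set α, ∀ r ∈ R, (b ∩ r).Infinite ∧ (r \ b).Infinite) :
    ¬ IdealComplete (finQuot α '' R) := by
  intro hic
  obtain ⟨b, hle, hdisj⟩ := hic ∅ ∅ (empty_subset _) (empty_subset _) countable_empty
    countable_empty (by simp)
  obtain ⟨B, rfl⟩ := finQuot_surjective b
  refine hsplit ⟨B, fun r hr ↦ ⟨fun hfin ↦ ?_, fun hfin ↦ ?_⟩⟩
  · have := (hdisj _ (mem_image_of_mem _ hr)).1 (finQuot_inf_eq_bot_iff.2 (by rwa [inter_comm]))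
    simp [subset_empty_iff, finQuot_eq_bot_iff, hR r hr] at this
  · have := (hle _ (mem_image_of_mem _ hr)).1 (finQuot_le_finQuot_iff.2 hfin)
    simp [subset_empty_iff, finQuot_eq_bot_iff, hR r hr] at this

theorem mcB_le_rNum : mcB (PowFin ℕ) ≤ rNum := by
  obtain ⟨R, hR, hRcard, hsplit⟩ := exists_unsplittable_mk_eq_rNum
  calc mcB (PowFin ℕ) ≤ #(finQuot ℕ '' R) := mcB_le_mk (not_idealComplete_image_finQuot hR hsplit)
    _ ≤ #R := mk_image_le
    _ = rNum := hRcard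

def pairColumn (n : ℕ) : Set ℕ := {x | x.unpair.1 = n}

def pairEpigraph (f : ℕ → ℕ) : Set ℕ := {x | f x.unpair.1 ≤ x.unpair.2}

theorem exists_finite_pairEpigraph_sdiff {B : Set ℕ} (hB : ∀ n, (pairColumn n \ B).Finite) :
    ∃ g : ℕ → ℕ, ∀ d : ℕ → ℕ, (∀ᶠ n in atTop, g n < d n) → (pairEpigraph d \ B).Finite := by
  choose g hg using fun n ↦ (hB n).bddAbove
  refine ⟨g, fun d hd ↦ ?_⟩
  obtain ⟨N, hN⟩ := eventually_atTop.1 hd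
  refine ((finite_Iio N).biUnion fun n _ ↦ finite_Iic (g n)).subset
    fun x ⟨(hxd : d _ ≤ _), hxB⟩ ↦ ?_
  have hxg : x ≤ g x.unpair.1 := hg x.unpair.1 ⟨rfl, hxB⟩
  refine mem_biUnion (mem_Iio.2 <| lt_of_not_ge fun hN' ↦ ?_) hxg
  have := hN _ hN'
  have := x.unpair_right_le
  omega

theorem infinite_pairEpigraph_sdiff (d : ℕ → ℕ) (M : ℕ) :
    (pairEpigraph d \ {x | x.unpair.1 < M}).Infinite := by
  refine infinite_of_forall_exists_gt fun K ↦ ⟨Nat.pair M (max (d M) (K + 1)), ?_, ?_⟩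
  · simp [pairEpigraph]
  · exact (Nat.lt_succ_self K).trans_le ((le_max_right _ _).trans (Nat.right_le_pair _ _))

theorem mcB_le_dNum : mcB (PowFin ℕ) ≤ dNum := by
  obtain ⟨D, hDcard, hD⟩ := exists_dominating_mk_eq_dNum
  set S := range (finQuot ℕ ∘ pairColumn)
  have hA : ¬ IdealComplete (S ∪ (finQuot ℕ ∘ pairEpigraph) '' D) := by
    intro hic
    obtain ⟨b, hle, -⟩ := hic S ∅ subset_union_left (empty_subset _) (countable_range _)
      countable_empty (by simp)
    obtain ⟨B, rfl⟩ := finQuot_surjective b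
    obtain ⟨g, hg⟩ := exists_finite_pairEpigraph_sdiff fun n ↦ finQuot_le_finQuot_iff.1 <|
      (hle _ (Or.inl ⟨n, rfl⟩)).2 ⟨{finQuot ℕ (pairColumn n)}, by simp [S], by simp⟩
    obtain ⟨d, hdD, hd⟩ := hD g
    obtain ⟨F, hFS, hdF⟩ :=
      (hle _ (Or.inr ⟨d, hdD, rfl⟩)).1 (finQuot_le_finQuot_iff.2 (hg d hd))
    have hcol : ∀ s ∈ S, ∃ M, s ≤ finQuot ℕ {x | x.unpair.1 < M} :=
      forall_mem_range.2 fun n ↦ ⟨n + 1, OrderHomClass.mono (finQuot ℕ) fun x hx ↦ by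
        simp [pairColumn] at hx ⊢; omega⟩
    have hmono : Monotone fun M ↦ finQuot ℕ {x | x.unpair.1 < M} :=
      fun _ _ h ↦ OrderHomClass.mono (finQuot ℕ) fun x (hx : _ < _) ↦ hx.trans_le h
    obtain ⟨M, hFM⟩ := exists_sup_le_of_monotone hmono hcol hFS
    exact infinite_pairEpigraph_sdiff d M (finQuot_le_finQuot_iff.1 (hdF.trans hFM))
  have hDinf : ℵ₀ ≤ #D := aleph0_le_mk_iff.2 (infinite_of_dominating hD).to_subtype
  calc mcB (PowFin ℕ) ≤ #↑(S ∪ (finQuot ℕ ∘ pairEpigraph) '' D) := mcB_le_mk hA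
    _ ≤ ℵ₀ + #D := (mk_union_le _ _).trans (add_le_add (mk_range_le.trans mk_nat.le) mk_image_le)
    _ = #D := add_eq_right hDinf hDinf
    _ = dNum := hDcard

end UpperBounds

section Towers

theorem exists_separating_of_finite_inter {α : Type*} {σ τ : ℕ → Set α} (hσ : Monotone σ)
    (hτ : Monotone τ) (hστ : ∀ n, (σ n ∩ τ n).Finite) :
    ∃ W : Set α, (∀ n, (σ n \ W).Finite) ∧ ∀ m, (W ∩ τ m).Finite := by
  refine ⟨⋃ n, σ n \ τ n, fun n ↦ (hστ n).subset fun x ⟨hxσ, hxW⟩ ↦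
    ⟨hxσ, not_not.1 fun hxτ ↦ hxW (mem_iUnion_of_mem n ⟨hxσ, hxτ⟩)⟩, fun m ↦ (hστ m).subset ?_⟩
  rintro x ⟨hxW, hxτ⟩
  obtain ⟨n, hxσ, hxτn⟩ := mem_iUnion.1 hxW
  exact ⟨hσ (le_of_not_gt fun hmn ↦ hxτn (hτ hmn.le hxτ)) hxσ, hxτ⟩

variable {τ : ℕ → Set ℕ} {𝒜 : Set (Set ℕ)}

theorem exists_almost_disjoint_meeting_of_mk_lt_dNum (hτ : Monotone τ) (hd : #𝒜 < dNum) :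
    ∃ E : Set ℕ, (∀ m, (E ∩ τ m).Finite) ∧
      ∀ a ∈ 𝒜, (∀ m, (a \ τ m).Infinite) → (a ∩ E).Infinite := by
  set 𝒰 := {a ∈ 𝒜 | ∀ m, (a \ τ m).Infinite}
  choose x hx hxm using fun (a : 𝒰) m ↦ (a.2.2 m).exists_gt m
  obtain ⟨g, hg⟩ := exists_not_dominated_of_mk_lt_dNum
    (mk_range_le.trans_lt ((mk_le_mk_of_subset (sep_subset _ _)).trans_lt hd) : #(range x) < _)
  refine ⟨{y | ∃ n, y ≤ g n ∧ y ∉ τ n}, fun m ↦ ?_, fun a ha hunb ↦ ?_⟩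
  · refine ((finite_Iio m).biUnion fun n _ ↦ finite_Iic (g n)).subset ?_
    rintro y ⟨⟨n, hyn, hyτ⟩, hym⟩
    exact mem_biUnion (mem_Iio.2 <| lt_of_not_ge fun hmn ↦ hyτ (hτ hmn hym)) hyn
  · refine infinite_of_forall_exists_gt fun K ↦ ?_
    obtain ⟨n, hKn, hn⟩ := (hg _ ⟨⟨a, ha, hunb⟩, rfl⟩).forall_exists_of_atTop K
    have := hx ⟨a, ha, hunb⟩ n
    exact ⟨_, ⟨this.1, n, hn, this.2⟩, hKn.trans_lt (hxm _ n)⟩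

theorem exists_tower_splitter (hτ : Monotone τ) (hr : #𝒜 < rNum) (hd : #𝒜 < dNum) :
    ∃ C : Set ℕ, (∀ m, (C ∩ τ m).Finite) ∧ ∀ a ∈ 𝒜,
      (a.Infinite → (a \ C).Infinite) ∧ ((∀ m, (a \ τ m).Infinite) → (a ∩ C).Infinite) := by
  obtain ⟨E, hEτ, hE⟩ := exists_almost_disjoint_meeting_of_mk_lt_dNum hτ hd
  set 𝒰 := {a ∈ 𝒜 | ∀ m, (a \ τ m).Infinite}
  obtain ⟨b, hb⟩ := exists_splitting_of_mk_lt_rNum (R := (· ∩ E) '' 𝒰)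
    (by rintro _ ⟨a, ⟨ha, hunb⟩, rfl⟩; exact hE a ha hunb)
    (mk_image_le.trans_lt ((mk_le_mk_of_subset (sep_subset _ _)).trans_lt hr))
  have hsplit : ∀ a ∈ 𝒰, (a ∩ (E ∩ b)).Infinite ∧ (a \ (E ∩ b)).Infinite := by
    rintro a ha
    obtain ⟨hin, hout⟩ := hb _ (mem_image_of_mem _ ha)
    refine ⟨hin.mono ?_, hout.mono ?_⟩
    · rintro x ⟨hxb, hxa, hxE⟩
      exact ⟨hxa, hxE, hxb⟩
    · rintro x ⟨⟨hxa, -⟩, hxb⟩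
      exact ⟨hxa, fun hx ↦ hxb hx.2⟩
  refine ⟨E ∩ b, fun m ↦ (hEτ m).subset (inter_subset_inter_left _ inter_subset_left),
    fun a ha ↦ ⟨fun hinf ↦ ?_, fun hunb ↦ (hsplit a ⟨ha, hunb⟩).1⟩⟩
  by_cases hunb : ∀ m, (a \ τ m).Infinite
  · exact (hsplit a ⟨ha, hunb⟩).2
  obtain ⟨m, hm⟩ := not_forall.1 hunb
  have haτ : (a ∩ τ m).Infinite := by
    rw [← sdiff_sdiff_right_self]; exact hinf.sdiff (not_infinite.1 hm)
  refine (haτ.sdiff (hEτ m)).mono ?_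
  rintro x ⟨⟨hxa, hxτ⟩, hx⟩
  exact ⟨hxa, fun hxC ↦ hx ⟨hxC.1, hxτ⟩⟩

end Towers

theorem exists_separating_of_mk_lt {σ τ : ℕ → Set ℕ} (hσ : Monotone σ) (hτ : Monotone τ)
    (hστ : ∀ n, (σ n ∩ τ n).Finite) {𝒜 : Set (Set ℕ)} (hr : #𝒜 < rNum) (hd : #𝒜 < dNum) :
    ∃ B : Set ℕ, (∀ n, (σ n \ B).Finite) ∧ (∀ m, (B ∩ τ m).Finite) ∧ ∀ a ∈ 𝒜,
      ((∀ n, (a \ σ n).Infinite) → (a \ B).Infinite) ∧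
      ((∀ m, (a \ τ m).Infinite) → (a ∩ B).Infinite) := by
  obtain ⟨W, hσW, hWτ⟩ := exists_separating_of_finite_inter hσ hτ hστ
  obtain ⟨Cσ, hCσ, hσsplit⟩ := exists_tower_splitter hσ (𝒜 := (· ∩ W) '' 𝒜)
    (mk_image_le.trans_lt hr) (mk_image_le.trans_lt hd)
  obtain ⟨Cτ, hCτ, hτsplit⟩ := exists_tower_splitter hτ (𝒜 := (· \ W) '' 𝒜)
    (mk_image_le.trans_lt hr) (mk_image_le.trans_lt hd)
  refine ⟨(W \ Cσ) ∪ (Cτ \ W), fun n ↦ ((hσW n).union (hCσ n)).subset ?_,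
    fun m ↦ ((hWτ m).union (hCτ m)).subset ?_, fun a ha ↦ ?_⟩
  · intro x; simp only [mem_sdiff, mem_union, mem_inter_iff]; tauto
  · intro x; simp only [mem_sdiff, mem_union, mem_inter_iff]; tauto
  obtain ⟨hσout, hσin⟩ := hσsplit _ (mem_image_of_mem _ ha)
  obtain ⟨hτout, hτin⟩ := hτsplit _ (mem_image_of_mem _ ha)
  refine ⟨fun hunb ↦ ?_, fun hunb ↦ ?_⟩
  · by_cases haW : (a \ W).Infinite
    · refine (hτout haW).mono fun x ↦ ?_
      simp only [mem_sdiff, mem_union]; tauto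
    · have hesc : ∀ n, ((a ∩ W) \ σ n).Infinite := fun n ↦
        ((hunb n).sdiff (not_infinite.1 haW)).mono fun x ↦ by
          simp only [mem_sdiff, mem_inter_iff]; tauto
      refine (hσin hesc).mono fun x ↦ ?_
      simp only [mem_sdiff, mem_union, mem_inter_iff]; tauto
  · by_cases haW : (a ∩ W).Infinite
    · refine (hσout haW).mono fun x ↦ ?_
      simp only [mem_sdiff, mem_union, mem_inter_iff]; tauto
    · have hesc : ∀ m, ((a \ W) \ τ m).Infinite := fun m ↦
        ((hunb m).sdiff (not_infinite.1 haW)).mono fun x ↦ by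
          simp only [mem_sdiff, mem_inter_iff]; tauto
      refine (hτin hesc).mono fun x ↦ ?_
      simp only [mem_sdiff, mem_union, mem_inter_iff]; tauto

theorem idealComplete_of_mk_lt {A : Set (PowFin ℕ)} (hr : #A < rNum) (hd : #A < dNum) :
    IdealComplete A := by
  intro S T _ _ hS hT hST
  obtain ⟨u, hu, hSu⟩ := hS.exists_monotone_generating
  obtain ⟨v, hv, hTv⟩ := hT.exists_monotone_generating
  obtain ⟨σ, hσ, rfl⟩ := exists_monotone_finQuot_comp_eq hu
  obtain ⟨τ, hτ, rfl⟩ := exists_monotone_finQuot_comp_eq hv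
  have hστ : ∀ n, (σ n ∩ τ n).Finite := fun n ↦ by
    obtain ⟨F, hFS, hσF⟩ := (hSu _).2 ⟨n, le_rfl⟩
    obtain ⟨G, hGT, hτG⟩ := (hTv _).2 ⟨n, le_rfl⟩
    have hFG : Disjoint (F.sup id) (G.sup id) := Finset.disjoint_sup_left.2 fun s hs ↦
      Finset.disjoint_sup_right.2 fun t ht ↦ disjoint_iff.2 (hST s (hFS hs) t (hGT ht))
    exact finQuot_inf_eq_bot_iff.1 (disjoint_iff.1 (hFG.mono hσF hτG))
  choose rep hrep using finQuot_surjective (α := ℕ)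
  obtain ⟨B, hσB, hBτ, hB⟩ := exists_separating_of_mk_lt hσ hτ hστ (𝒜 := rep '' A)
    (mk_image_le.trans_lt hr) (mk_image_le.trans_lt hd)
  refine ⟨finQuot ℕ B, fun a ha ↦ ?_, fun a ha ↦ ?_⟩
  · rw [hSu]
    refine ⟨fun haB ↦ ?_, fun ⟨n, han⟩ ↦ han.trans (finQuot_le_finQuot_iff.2 (hσB n))⟩
    rw [← hrep a, finQuot_le_finQuot_iff] at haB
    by_contra! h
    refine (hB _ (mem_image_of_mem _ ha)).1 (fun n hfin ↦ h n ?_) haB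
    rw [Function.comp_apply, ← hrep a]
    exact finQuot_le_finQuot_iff.2 hfin
  · rw [hTv]
    refine ⟨fun haB ↦ ?_, fun ⟨m, ham⟩ ↦ le_bot_iff.1 ?_⟩
    · rw [← hrep a, finQuot_inf_eq_bot_iff] at haB
      by_contra! h
      refine (hB _ (mem_image_of_mem _ ha)).2 (fun m hfin ↦ h m ?_) haB
      rw [Function.comp_apply, ← hrep a]
      exact finQuot_le_finQuot_iff.2 hfin
    · refine (inf_le_inf_right _ ham).trans_eq (finQuot_inf_eq_bot_iff.2 ?_)
      rw [inter_comm]; exact hBτ m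

/-- `𝔪𝔠 = min(𝔯, 𝔡)`, where `𝔪𝔠 = 𝔪𝔠(P(ω)/fin)`, `𝔯` is the reaping number and `𝔡` the
dominating number. -/
theorem mc_eq_min_r_d : mcB (PowFin ℕ) = min rNum dNum := by
  obtain ⟨R, hR, -, hsplit⟩ := exists_unsplittable_mk_eq_rNum
  refine le_antisymm (le_min mcB_le_rNum mcB_le_dNum)
    (le_mcB ⟨_, not_idealComplete_image_finQuot hR hsplit⟩ fun A hA ↦ ?_)
  exact idealComplete_of_mk_lt (hA.trans_le (min_le_left _ _)) (hA.trans_le (min_le_right _ _))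
end

section
/- Let B be a Boolean algebra, A an ℵ₀-ideal subalgebra of B, and ℐ an ideal of B that is generated by ℐ ∩ A. Then A/ℐ (i.e., the image of A in the quotient B/ℐ) is an ℵ₀-ideal subalgebra of B/ℐ. -/
/-!
If `π a ≤ π b` with `a ∈ A`, then `π (a \ b) = ⊥`, so `a \ b` lies below some `d ∈ A` with
`π d = ⊥`. The element `a \ d` is in `A`, lies below `b`, and has the same image as `a`.
Hence the image of a countable cofinal subset of `{a ∈ A : a ≤ b}` is cofinal in
`{x ∈ π '' A : x ≤ π b}`.
-/

theorem IsSubalg.sdiff_mem {B : Type*} [BooleanAlgebra B] {A : Set B} (hA : IsSubalg A)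
    {a d : B} (ha : a ∈ A) (hd : d ∈ A) : a \ d ∈ A := by
  rw [sdiff_eq]
  exact hA.2.2.2.1 a ha dᶜ (hA.2.2.2.2 d hd)

section BooleanHom

variable {B Q : Type*} [BooleanAlgebra B] [BooleanAlgebra Q] (π : BoundedLatticeHom B Q)

theorem map_sdiff_eq_bot_of_map_le {a b : B} (h : π a ≤ π b) : π (a \ b) = ⊥ :=
  (map_sdiff' π a b).trans (sdiff_eq_bot_iff.mpr h)

theorem map_sdiff_of_map_eq_bot (a : B) {d : B} (hd : π d = ⊥) : π (a \ d) = π a := by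
  rw [map_sdiff', hd, sdiff_bot]

theorem exists_mem_le_map_eq_of_map_le {A : Set B} (hA : IsSubalg A)
    (hgen : ∀ x : B, π x = ⊥ → ∃ a ∈ A, π a = ⊥ ∧ x ≤ a)
    {a b : B} (ha : a ∈ A) (hab : π a ≤ π b) : ∃ a' ∈ A, a' ≤ b ∧ π a' = π a := by
  obtain ⟨d, hdA, hd, hle⟩ := hgen (a \ b) (map_sdiff_eq_bot_of_map_le π hab)
  exact ⟨a \ d, hA.sdiff_mem ha hdA, sdiff_le_comm.mp hle, map_sdiff_of_map_eq_bot π a hd⟩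

end BooleanHom

/-- `Q` plays the role of `B/ℐ`, with `π` the quotient map and `ℐ` its kernel; `hgen` says
that `ℐ` is generated by `ℐ ∩ A`. -/
theorem quotient_aleph0Ideal {B Q : Type*} [BooleanAlgebra B] [BooleanAlgebra Q]
    (π : BoundedLatticeHom B Q) (hsurj : Function.Surjective π)
    (A : Set B) (hA : IsSubalg A) (hAid : Aleph0Ideal A)
    (hgen : ∀ x : B, π x = ⊥ → ∃ a ∈ A, π a = ⊥ ∧ x ≤ a) :
    Aleph0Ideal (π '' A) := by
  intro q _ hq
  obtain ⟨b, rfl⟩ := hsurj q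
  have hb : b ∉ A := fun hb => hq ⟨b, hb, rfl⟩
  obtain ⟨C, hC, hCA, hCb, hCcof⟩ := hAid b (Set.mem_univ b) hb
  refine ⟨π '' C, hC.image π, Set.image_mono hCA, ?_, ?_⟩
  · rintro _ ⟨c, hc, rfl⟩
    exact OrderHomClass.mono π (hCb c hc)
  · rintro _ ⟨a, ha, rfl⟩ hab
    obtain ⟨a', ha'A, ha'b, ha'⟩ := exists_mem_le_map_eq_of_map_le π hA hgen ha hab
    obtain ⟨c, hc, ha'c⟩ := hCcof a' ha'A ha'b
    exact ⟨π c, ⟨c, hc, rfl⟩, ha' ▸ OrderHomClass.mono π ha'c⟩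
end

section
/- Let B be a Boolean algebra and ℐ an ideal on B admitting a lifting l : B/ℐ → B (a Boolean homomorphism with l(b/ℐ)/ℐ = b/ℐ for all b). If A is an ℵ₀-ideal subalgebra of B with l[A/ℐ] ⊆ A, then A/ℐ is an ℵ₀-ideal subalgebra of B/ℐ. -/
/-!
For `q ∉ π[A]` the lift `l q` lies outside `A`, so `{a ∈ A : a ≤ l q}` has a countable
cofinal set `C`; its image `π[C]` is cofinal in `{x ∈ π[A] : x ≤ q}` because any such `x = π a`
lifts to `l x ∈ A` with `l x ≤ l q`.
-/

theorem Aleph0Ideal.image_of_leftInverse {B Q : Type*} [BooleanAlgebra B] [BooleanAlgebra Q]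
    {A : Set B} (hA : Aleph0Ideal A) {f : B → Q} {g : Q → B} (hf : Monotone f)
    (hg : Monotone g) (hfg : Function.LeftInverse f g) (hgfA : ∀ a ∈ A, g (f a) ∈ A) :
    Aleph0Ideal (f '' A) := by
  intro q _ hq
  have hgq : g q ∉ A := fun h => hq ⟨g q, h, hfg q⟩
  obtain ⟨C, hC_countable, hCA, hC_le, hC_cofinal⟩ := hA (g q) (Set.mem_univ _) hgq
  refine ⟨f '' C, hC_countable.image f, Set.image_mono hCA, ?_, ?_⟩
  · rintro _ ⟨c, hc, rfl⟩
    simpa only [hfg q] using hf (hC_le c hc)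
  · rintro _ ⟨a, ha, rfl⟩ hfa
    obtain ⟨c, hc, hac⟩ := hC_cofinal _ (hgfA a ha) (hg hfa)
    exact ⟨f c, Set.mem_image_of_mem f hc, by simpa only [hfg (f a)] using hf hac⟩

/-- The quotient map `B → B/ℐ` is modelled by `π : B → Q`, the lifting by `l` with
`π ∘ l = id`, and `A/ℐ` by `π '' A`. -/
theorem quotient_lifting_aleph0Ideal_general {B Q : Type*} [BooleanAlgebra B] [BooleanAlgebra Q]
    (π : BoundedLatticeHom B Q)
    (l : BoundedLatticeHom Q B) (hlift : ∀ q : Q, π (l q) = q)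
    (A : Set B) (hAid : Aleph0Ideal A)
    (hlA : ∀ a ∈ A, l (π a) ∈ A) :
    Aleph0Ideal (π '' A) :=
  hAid.image_of_leftInverse (OrderHomClass.mono π) (OrderHomClass.mono l) hlift hlA

/-- Quotients by ideals with a lifting.  The quotient `B/ℐ` is represented by a
surjective homomorphism `π : B → Q` of Boolean algebras whose kernel is `ℐ`, and
`l : Q → B` is a lifting, i.e. a Boolean homomorphism with `π ∘ l = id`.  If `A` is an
ℵ₀-ideal subalgebra of `B` with `l[A/ℐ] ⊆ A`, then `A/ℐ = π '' A` is an ℵ₀-ideal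
subalgebra of `B/ℐ = Q`. -/
theorem quotient_lifting_aleph0Ideal {B Q : Type*} [BooleanAlgebra B] [BooleanAlgebra Q]
    (π : BoundedLatticeHom B Q) (hsurj : Function.Surjective π)
    (l : BoundedLatticeHom Q B) (hlift : ∀ q : Q, π (l q) = q)
    (A : Set B) (hA : IsSubalg A) (hAid : Aleph0Ideal A)
    (hlA : ∀ a ∈ A, l (π a) ∈ A) :
    Aleph0Ideal (π '' A) :=
  quotient_lifting_aleph0Ideal_general π l hlift A hAid hlA
end

section
/- Assuming the Continuum Hypothesis, every infinite Boolean algebra B with no (ω,ω)-gaps contains an isomorphic copy of P(ω); equivalently, every infinite compact zero-dimensional F-space maps continuously onto βℕ. -/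
namespace PowSetEmbedAux

variable {B : Type*} [BooleanAlgebra B]

/-- A partial Boolean homomorphism from `P(ω)` to `B`. -/
structure PartHom (B : Type*) [BooleanAlgebra B] where
  D : Set (Set ℕ)
  g : Set ℕ → B
  mem_bot : (∅ : Set ℕ) ∈ D
  mem_union : ∀ {x y}, x ∈ D → y ∈ D → x ∪ y ∈ D
  mem_compl : ∀ {x}, x ∈ D → xᶜ ∈ D
  map_bot : g ∅ = ⊥
  map_union : ∀ {x y}, x ∈ D → y ∈ D → g (x ∪ y) = g x ⊔ g y
  map_compl : ∀ {x}, x ∈ D → g xᶜ = (g x)ᶜ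

namespace PartHom

variable (p : PartHom B) {x y : Set ℕ}

lemma mem_top : (Set.univ : Set ℕ) ∈ p.D := by
  simpa using p.mem_compl p.mem_bot

lemma map_top : p.g Set.univ = ⊤ := by
  have := p.map_compl p.mem_bot
  rw [Set.compl_empty, p.map_bot, compl_bot] at this
  exact this

lemma mem_inter (hx : x ∈ p.D) (hy : y ∈ p.D) : x ∩ y ∈ p.D := by
  have : x ∩ y = (xᶜ ∪ yᶜ)ᶜ := by simp [Set.compl_union]
  rw [this]
  exact p.mem_compl (p.mem_union (p.mem_compl hx) (p.mem_compl hy))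

lemma map_inter (hx : x ∈ p.D) (hy : y ∈ p.D) : p.g (x ∩ y) = p.g x ⊓ p.g y := by
  have h : x ∩ y = (xᶜ ∪ yᶜ)ᶜ := by simp [Set.compl_union]
  rw [h, p.map_compl (p.mem_union (p.mem_compl hx) (p.mem_compl hy)),
    p.map_union (p.mem_compl hx) (p.mem_compl hy), p.map_compl hx, p.map_compl hy]
  simp

lemma mem_diff (hx : x ∈ p.D) (hy : y ∈ p.D) : x \ y ∈ p.D := by
  rw [Set.diff_eq]; exact p.mem_inter hx (p.mem_compl hy)

lemma map_diff (hx : x ∈ p.D) (hy : y ∈ p.D) : p.g (x \ y) = p.g x \ p.g y := by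
  rw [Set.diff_eq, p.map_inter hx (p.mem_compl hy), p.map_compl hy, sdiff_eq]

lemma mono (hx : x ∈ p.D) (hy : y ∈ p.D) (hxy : x ⊆ y) : p.g x ≤ p.g y := by
  have : x ∪ y = y := Set.union_eq_self_of_subset_left hxy
  have h2 := p.map_union hx hy
  rw [this] at h2
  rw [h2]; exact le_sup_left

/-- Extension order. -/
def le (p q : PartHom B) : Prop := p.D ⊆ q.D ∧ ∀ x ∈ p.D, q.g x = p.g x

lemma le_refl (p : PartHom B) : p.le p := ⟨subset_rfl, fun _ _ => rfl⟩

lemma le_trans {p q r : PartHom B} (h1 : p.le q) (h2 : q.le r) : p.le r :=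
  ⟨h1.1.trans h2.1, fun x hx => (h2.2 x (h1.1 hx)).trans (h1.2 x hx)⟩

end PartHom


variable (a : ℕ → B)
open scoped Classical





lemma sup_inf_eq (had : ∀ m n, m ≠ n → a m ⊓ a n = ⊥) (s t : Finset ℕ) : s.sup a ⊓ t.sup a = (s ∩ t).sup a := by
  apply le_antisymm
  · rw [Finset.sup_inf_distrib_right]
    apply Finset.sup_le
    intro i hi
    rw [Finset.sup_inf_distrib_left]
    apply Finset.sup_le
    intro j hj
    rcases eq_or_ne i j with rfl | hij
    · simpa using Finset.le_sup (Finset.mem_inter.2 ⟨hi, hj⟩)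
    · rw [had i j hij]; exact bot_le
  · exact le_inf (Finset.sup_mono Finset.inter_subset_left)
      (Finset.sup_mono Finset.inter_subset_right)

lemma sup_diff_eq (had : ∀ m n, m ≠ n → a m ⊓ a n = ⊥) (s t : Finset ℕ) : (t \ s).sup a = t.sup a ⊓ (s.sup a)ᶜ := by
  have h1 : (t \ s).sup a ⊓ s.sup a = ⊥ := by
    rw [sup_inf_eq a had]
    simp [Finset.sdiff_inter_self]
  have h2 : t.sup a = (t \ s).sup a ⊔ (t ∩ s).sup a := by
    rw [← Finset.sup_union, Finset.sdiff_union_inter]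
  rw [h2, inf_sup_right]
  have h3 : (t \ s).sup a ⊓ (s.sup a)ᶜ = (t \ s).sup a :=
    inf_eq_left.2 (le_compl_iff_disjoint_right.2 (disjoint_iff.2 h1))
  have h4 : (t ∩ s).sup a ⊓ (s.sup a)ᶜ = ⊥ := by
    have : (t ∩ s).sup a ≤ s.sup a := Finset.sup_mono Finset.inter_subset_right
    exact le_bot_iff.1 (le_trans (inf_le_inf_right _ this) (le_of_eq inf_compl_eq_bot))
  rw [h3, h4, sup_bot_eq]



lemma not_fin_cofin {A : Set ℕ} (h : A.Finite) (h2 : Aᶜ.Finite) : False := by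
  have : (Set.univ : Set ℕ).Finite := by
    simpa [Set.union_compl_self] using h.union h2
  exact Set.infinite_univ this

variable (a : ℕ → B)
open scoped Classical

/-- The value function of the base partial homomorphism, defined on the
finite-cofinite algebra. -/
noncomputable def baseG (A : Set ℕ) : B :=
  if h : A.Finite then h.toFinset.sup a
  else if h2 : Aᶜ.Finite then (h2.toFinset.sup a)ᶜ else ⊥

lemma baseG_fin {A : Set ℕ} (h : A.Finite) : baseG a A = h.toFinset.sup a := dif_pos h

lemma baseG_cofin {A : Set ℕ} (h2 : Aᶜ.Finite) (h : ¬A.Finite) :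
    baseG a A = (h2.toFinset.sup a)ᶜ := by
  rw [baseG, dif_neg h, dif_pos h2]

/-- The base partial homomorphism. -/
noncomputable def base (had : ∀ m n, m ≠ n → a m ⊓ a n = ⊥) : PartHom B where
  D := {A : Set ℕ | A.Finite ∨ Aᶜ.Finite}
  g := baseG a
  mem_bot := Or.inl (Set.finite_empty)
  mem_union := by
    rintro x y (hx | hx) (hy | hy)
    · exact Or.inl (hx.union hy)
    · exact Or.inr (by rw [Set.compl_union]; exact hy.inter_of_right _)
    · exact Or.inr (by rw [Set.compl_union]; exact hx.inter_of_left _)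
    · exact Or.inr (by rw [Set.compl_union]; exact hx.inter_of_left _)
  mem_compl := by
    rintro x (hx | hx)
    · exact Or.inr (by simpa using hx)
    · exact Or.inl hx
  map_bot := by
    rw [baseG_fin a Set.finite_empty]
    have : (Set.finite_empty (α := ℕ)).toFinset = (∅ : Finset ℕ) := by
      apply Finset.ext; simp
    rw [this, Finset.sup_empty]
  map_union := by
    rintro x y (hx | hx) (hy | hy)
    · rw [baseG_fin a hx, baseG_fin a hy, baseG_fin a (hx.union hy)]
      have : (Set.Finite.union hx hy).toFinset = hx.toFinset ∪ hy.toFinset := by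
        apply Finset.ext; simp
      rw [this, Finset.sup_union]
    · -- x finite, y cofinite
      have hyi : ¬y.Finite := fun h => not_fin_cofin h hy
      have hui : ¬(x ∪ y).Finite := fun h => hyi (h.subset Set.subset_union_right)
      have huc : (x ∪ y)ᶜ.Finite := by
        rw [Set.compl_union]; exact hy.inter_of_right _
      rw [baseG_fin a hx, baseG_cofin a hy hyi, baseG_cofin a huc hui]
      have ht : huc.toFinset = hy.toFinset \ hx.toFinset := by
        apply Finset.ext; intro n
        simp [Set.compl_union, Set.mem_inter_iff, and_comm]
      rw [ht, sup_diff_eq a had, compl_inf, compl_compl]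
      exact sup_comm _ _
    · -- x cofinite, y finite
      have hxi : ¬x.Finite := fun h => not_fin_cofin h hx
      have hui : ¬(x ∪ y).Finite := fun h => hxi (h.subset Set.subset_union_left)
      have huc : (x ∪ y)ᶜ.Finite := by
        rw [Set.compl_union]; exact hx.inter_of_left _
      rw [baseG_cofin a hx hxi, baseG_fin a hy, baseG_cofin a huc hui]
      have ht : huc.toFinset = hx.toFinset \ hy.toFinset := by
        apply Finset.ext; intro n
        simp [Set.compl_union, Set.mem_inter_iff, and_comm]
      rw [ht, sup_diff_eq a had, compl_inf, compl_compl]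
    · -- both cofinite
      have hxi : ¬x.Finite := fun h => not_fin_cofin h hx
      have hui : ¬(x ∪ y).Finite := fun h => hxi (h.subset Set.subset_union_left)
      have hyi : ¬y.Finite := fun h => not_fin_cofin h hy
      have huc : (x ∪ y)ᶜ.Finite := by
        rw [Set.compl_union]; exact hx.inter_of_left _
      rw [baseG_cofin a hx hxi, baseG_cofin a hy hyi, baseG_cofin a huc hui]
      have ht : huc.toFinset = hx.toFinset ∩ hy.toFinset := by
        apply Finset.ext; intro n; simp [Set.compl_union]
      rw [ht, ← sup_inf_eq a had, compl_inf]
  map_compl := by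
    rintro x (hx | hx)
    · have hxc : ¬xᶜ.Finite := fun h => not_fin_cofin hx h
      have hcc : xᶜᶜ.Finite := by simpa using hx
      rw [baseG_cofin a hcc hxc, baseG_fin a hx]
      have ht : hcc.toFinset = hx.toFinset := by apply Finset.ext; simp
      rw [ht]
    · rcases Classical.em x.Finite with hxf | hxf
      · have hxc : ¬xᶜ.Finite := fun h => not_fin_cofin hxf h
        have hcc : xᶜᶜ.Finite := by simpa using hxf
        rw [baseG_cofin a hcc hxc, baseG_fin a hxf]
        have ht : hcc.toFinset = hxf.toFinset := by apply Finset.ext; simp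
        rw [ht]
      · rw [baseG_fin a hx, baseG_cofin a hx hxf, compl_compl]

lemma base_g_singleton (had : ∀ m n, m ≠ n → a m ⊓ a n = ⊥) (n : ℕ) :
    (base a had).g {n} = a n := by
  have h : ({n} : Set ℕ).Finite := Set.finite_singleton n
  show baseG a {n} = a n
  rw [baseG_fin a h]
  have : h.toFinset = {n} := by apply Finset.ext; simp
  rw [this, Finset.sup_singleton]

lemma base_mem_singleton (had : ∀ m n, m ≠ n → a m ⊓ a n = ⊥) (n : ℕ) :
    ({n} : Set ℕ) ∈ (base a had).D := Or.inl (Set.finite_singleton n)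

lemma base_countable (had : ∀ m n, m ≠ n → a m ⊓ a n = ⊥) :
    (base a had).D.Countable := by
  have h1 : {A : Set ℕ | A.Finite}.Countable := Set.Countable.setOf_finite
  have h2 : {A : Set ℕ | Aᶜ.Finite}.Countable := by
    have : {A : Set ℕ | Aᶜ.Finite} ⊆ compl '' {A : Set ℕ | A.Finite} := by
      intro A hA
      exact ⟨Aᶜ, hA, by simp⟩
    exact (h1.image _).mono this
  exact h1.union h2

variable (B) in
/-- The no-(ω,ω)-gaps property. -/
def NoGaps : Prop := ∀ S T : Set B, S.Countable → T.Countable →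
      (∀ s ∈ S, ∀ t ∈ T, s ⊓ t = ⊥) →
      ∃ b : B, (∀ s ∈ S, s ≤ b) ∧ ∀ t ∈ T, t ⊓ b = ⊥

/-- One-step extension of a countable partial homomorphism. -/
lemma extend_step (hno : NoGaps B) (p : PartHom B) (hc : p.D.Countable) (A : Set ℕ) :
    ∃ q : PartHom B, p.le q ∧ A ∈ q.D ∧ q.D.Countable := by
  classical
  obtain ⟨b, hb1, hb2⟩ := hno (p.g '' {c | c ∈ p.D ∧ c ⊆ A})
      (p.g '' {c | c ∈ p.D ∧ c ∩ A = ∅})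
      ((hc.mono (fun c hc' => hc'.1)).image _) ((hc.mono (fun c hc' => hc'.1)).image _)
      (by
        rintro s ⟨c, ⟨hcD, hcA⟩, rfl⟩ t ⟨c', ⟨hc'D, hc'A⟩, rfl⟩
        rw [← p.map_inter hcD hc'D]
        have : c ∩ c' = ∅ := by
          apply Set.eq_empty_of_subset_empty
          intro n hn
          rw [← hc'A]
          exact ⟨hn.2, hcA hn.1⟩
        rw [this, p.map_bot])
  have hb1' : ∀ c ∈ p.D, c ⊆ A → p.g c ≤ b := fun c hcD hcA =>
    hb1 _ ⟨c, ⟨hcD, hcA⟩, rfl⟩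
  have hb2' : ∀ c ∈ p.D, c ∩ A = ∅ → p.g c ⊓ b = ⊥ := fun c hcD hcA =>
    hb2 _ ⟨c, ⟨hcD, hcA⟩, rfl⟩
  have hb3 : ∀ c ∈ p.D, c ⊆ A → p.g c ⊓ bᶜ = ⊥ := by
    intro c hcD hcA
    have := hb1' c hcD hcA
    exact le_bot_iff.1 (le_trans (inf_le_inf_right _ this) (le_of_eq inf_compl_eq_bot))
  set val : Set ℕ → Set ℕ → B := fun c₁ c₂ => (p.g c₁ ⊓ b) ⊔ (p.g c₂ ⊓ bᶜ) with hval
  -- well-definedness auxiliary facts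
  have w1 : ∀ c ∈ p.D, ∀ d ∈ p.D, c ∩ A = d ∩ A → p.g c ⊓ b = p.g d ⊓ b := by
    have key : ∀ c ∈ p.D, ∀ d ∈ p.D, c ∩ A ⊆ d → p.g c ⊓ b = p.g (c ∩ d) ⊓ b := by
      intro c hcD d hdD hsub
      have hcd : c = (c ∩ d) ∪ (c \ d) := by
        ext n; by_cases hn : n ∈ d <;> simp [hn]
      have hdiff : (c \ d) ∩ A = ∅ := by
        apply Set.eq_empty_of_subset_empty
        rintro n ⟨⟨hn1, hn2⟩, hn3⟩
        exact hn2 (hsub ⟨hn1, hn3⟩)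
      conv_lhs => rw [hcd]
      rw [p.map_union (p.mem_inter hcD hdD) (p.mem_diff hcD hdD), inf_sup_right,
        hb2' _ (p.mem_diff hcD hdD) hdiff, sup_bot_eq]
    intro c hcD d hdD hcd
    rw [key c hcD d hdD (hcd ▸ Set.inter_subset_left), key d hdD c hcD
      (hcd ▸ Set.inter_subset_left), Set.inter_comm]
  have w2 : ∀ c ∈ p.D, ∀ d ∈ p.D, c \ A = d \ A → p.g c ⊓ bᶜ = p.g d ⊓ bᶜ := by
    have key : ∀ c ∈ p.D, ∀ d ∈ p.D, c \ A ⊆ d → p.g c ⊓ bᶜ = p.g (c ∩ d) ⊓ bᶜ := by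
      intro c hcD d hdD hsub
      have hcd : c = (c ∩ d) ∪ (c \ d) := by
        ext n; by_cases hn : n ∈ d <;> simp [hn]
      have hdiff : c \ d ⊆ A := by
        rintro n ⟨hn1, hn2⟩
        by_contra hn3
        exact hn2 (hsub ⟨hn1, hn3⟩)
      conv_lhs => rw [hcd]
      rw [p.map_union (p.mem_inter hcD hdD) (p.mem_diff hcD hdD), inf_sup_right,
        hb3 _ (p.mem_diff hcD hdD) hdiff, sup_bot_eq]
    intro c hcD d hdD hcd
    rw [key c hcD d hdD (hcd ▸ Set.diff_subset), key d hdD c hcD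
      (hcd ▸ Set.diff_subset), Set.inter_comm]
  have wd : ∀ c₁ ∈ p.D, ∀ c₂ ∈ p.D, ∀ d₁ ∈ p.D, ∀ d₂ ∈ p.D,
      (c₁ ∩ A) ∪ (c₂ \ A) = (d₁ ∩ A) ∪ (d₂ \ A) → val c₁ c₂ = val d₁ d₂ := by
    intro c₁ h1 c₂ h2 d₁ h3 d₂ h4 heq
    have sub1 : ∀ u v w z : Set ℕ, (u ∩ A) ∪ (v \ A) = (w ∩ A) ∪ (z \ A) →
        u ∩ A ⊆ w ∩ A := by
      intro u v w z h n hn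
      have h' : n ∈ (w ∩ A) ∪ (z \ A) := by rw [← h]; exact Or.inl hn
      rcases h' with h' | h'
      · exact h'
      · exact absurd hn.2 h'.2
    have sub2 : ∀ u v w z : Set ℕ, (u ∩ A) ∪ (v \ A) = (w ∩ A) ∪ (z \ A) →
        v \ A ⊆ z \ A := by
      intro u v w z h n hn
      have h' : n ∈ (w ∩ A) ∪ (z \ A) := by rw [← h]; exact Or.inr hn
      rcases h' with h' | h'
      · exact absurd h'.2 hn.2
      · exact h'
    have e1 : c₁ ∩ A = d₁ ∩ A :=
      Set.Subset.antisymm (sub1 _ _ _ _ heq) (sub1 _ _ _ _ heq.symm)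
    have e2 : c₂ \ A = d₂ \ A :=
      Set.Subset.antisymm (sub2 _ _ _ _ heq) (sub2 _ _ _ _ heq.symm)
    rw [hval]
    simp only []
    rw [w1 c₁ h1 d₁ h3 e1, w2 c₂ h2 d₂ h4 e2]
  set Dq : Set (Set ℕ) := {x | ∃ c₁ c₂, c₁ ∈ p.D ∧ c₂ ∈ p.D ∧ x = (c₁ ∩ A) ∪ (c₂ \ A)}
    with hDq
  set gq : Set ℕ → B := fun x =>
    if h : ∃ c₁ c₂, c₁ ∈ p.D ∧ c₂ ∈ p.D ∧ x = (c₁ ∩ A) ∪ (c₂ \ A) then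
      val h.choose h.choose_spec.choose else ⊥ with hgq
  have gval : ∀ {x c₁ c₂}, c₁ ∈ p.D → c₂ ∈ p.D → x = (c₁ ∩ A) ∪ (c₂ \ A) →
      gq x = val c₁ c₂ := by
    intro x c₁ c₂ h1 h2 hx
    have h : ∃ c₁ c₂, c₁ ∈ p.D ∧ c₂ ∈ p.D ∧ x = (c₁ ∩ A) ∪ (c₂ \ A) := ⟨c₁, c₂, h1, h2, hx⟩
    rw [hgq]
    simp only [dif_pos h]
    obtain ⟨e1, e2, e3⟩ := h.choose_spec.choose_spec
    exact wd _ e1 _ e2 _ h1 _ h2 (by rw [← e3, ← hx])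
  have memq : ∀ {x c₁ c₂}, c₁ ∈ p.D → c₂ ∈ p.D → x = (c₁ ∩ A) ∪ (c₂ \ A) → x ∈ Dq :=
    fun h1 h2 hx => ⟨_, _, h1, h2, hx⟩
  have hself : ∀ c ∈ p.D, c = (c ∩ A) ∪ (c \ A) := by
    intro c _; ext n; by_cases hn : n ∈ A <;> simp [hn]
  refine ⟨⟨Dq, gq, ?_, ?_, ?_, ?_, ?_, ?_⟩, ⟨?_, ?_⟩, ?_, ?_⟩
  · exact memq p.mem_bot p.mem_bot (hself _ p.mem_bot)
  · -- mem_union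
    rintro x y ⟨c₁, c₂, h1, h2, rfl⟩ ⟨d₁, d₂, h3, h4, rfl⟩
    refine memq (p.mem_union h1 h3) (p.mem_union h2 h4) ?_
    ext n; by_cases hn : n ∈ A <;> simp [hn] <;> tauto
  · -- mem_compl
    rintro x ⟨c₁, c₂, h1, h2, rfl⟩
    refine memq (p.mem_compl h1) (p.mem_compl h2) ?_
    ext n; by_cases hn : n ∈ A <;> simp [hn] <;> tauto
  · -- map_bot
    rw [gval p.mem_bot p.mem_bot (hself _ p.mem_bot), hval]
    simp [p.map_bot]
  · -- map_union
    rintro x y ⟨c₁, c₂, h1, h2, rfl⟩ ⟨d₁, d₂, h3, h4, rfl⟩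
    rw [gval h1 h2 rfl, gval h3 h4 rfl,
      gval (p.mem_union h1 h3) (p.mem_union h2 h4)
        (by ext n; by_cases hn : n ∈ A <;> simp [hn] <;> tauto),
      hval]
    simp only [p.map_union h1 h3, p.map_union h2 h4]
    rw [inf_sup_right, inf_sup_right]
    ac_rfl
  · -- map_compl
    rintro x ⟨c₁, c₂, h1, h2, rfl⟩
    rw [gval h1 h2 rfl,
      gval (p.mem_compl h1) (p.mem_compl h2)
        (by ext n; by_cases hn : n ∈ A <;> simp [hn] <;> tauto),
      hval]
    simp only [p.map_compl h1, p.map_compl h2]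
    have hsup : (((p.g c₁)ᶜ ⊓ b) ⊔ ((p.g c₂)ᶜ ⊓ bᶜ)) ⊔ ((p.g c₁ ⊓ b) ⊔ (p.g c₂ ⊓ bᶜ)) = ⊤ := by
      have : (((p.g c₁)ᶜ ⊓ b) ⊔ (p.g c₁ ⊓ b)) ⊔ (((p.g c₂)ᶜ ⊓ bᶜ) ⊔ (p.g c₂ ⊓ bᶜ)) = ⊤ := by
        rw [← inf_sup_right, ← inf_sup_right]
        simp
      rw [← this]; ac_rfl
    have hinf : (((p.g c₁)ᶜ ⊓ b) ⊔ ((p.g c₂)ᶜ ⊓ bᶜ)) ⊓ ((p.g c₁ ⊓ b) ⊔ (p.g c₂ ⊓ bᶜ)) = ⊥ := by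
      rw [inf_sup_right, inf_sup_left, inf_sup_left]
      apply le_bot_iff.1
      apply sup_le <;> apply sup_le
      · exact le_trans (inf_le_inf inf_le_left inf_le_left) (le_of_eq compl_inf_eq_bot)
      · exact le_trans (inf_le_inf inf_le_right inf_le_right) (le_of_eq inf_compl_eq_bot)
      · exact le_trans (inf_le_inf inf_le_right inf_le_right) (le_of_eq compl_inf_eq_bot)
      · exact le_trans (inf_le_inf inf_le_left inf_le_left) (le_of_eq compl_inf_eq_bot)
    exact ((IsCompl.of_eq hinf hsup).symm.compl_eq).symm
  · -- p.D ⊆ Dq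
    intro c hc
    exact memq hc hc (hself _ hc)
  · -- gq extends p.g
    intro c hc
    show gq c = p.g c
    rw [gval hc hc (hself _ hc), hval]
    simp only []
    rw [← inf_sup_left]
    simp
  · -- A ∈ Dq
    exact memq p.mem_top p.mem_bot (by simp)
  · -- countable
    have : Dq ⊆ (fun cc : Set ℕ × Set ℕ => (cc.1 ∩ A) ∪ (cc.2 \ A)) '' (p.D ×ˢ p.D) := by
      rintro x ⟨c₁, c₂, h1, h2, rfl⟩
      exact ⟨⟨c₁, c₂⟩, ⟨h1, h2⟩, rfl⟩
    exact ((hc.prod hc).image _).mono this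

lemma directed_union {ι : Type*} [Nonempty ι] (P : ι → PartHom B)
    (dir : ∀ i j, ∃ k, (P i).le (P k) ∧ (P j).le (P k)) :
    ∃ q : PartHom B, (∀ i, (P i).le q) ∧ q.D = ⋃ i, (P i).D := by
  classical
  set Dq : Set (Set ℕ) := ⋃ i, (P i).D with hDq
  set gq : Set ℕ → B := fun x => if h : ∃ i, x ∈ (P i).D then (P h.choose).g x else ⊥
    with hgq
  have gval : ∀ {x : Set ℕ} {i}, x ∈ (P i).D → gq x = (P i).g x := by
    intro x i hx
    have h : ∃ i, x ∈ (P i).D := ⟨i, hx⟩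
    rw [hgq]
    simp only [dif_pos h]
    obtain ⟨k, hk1, hk2⟩ := dir h.choose i
    rw [← hk1.2 x h.choose_spec, hk2.2 x hx]
  have memq : ∀ {x : Set ℕ} {i}, x ∈ (P i).D → x ∈ Dq := fun hx =>
    Set.mem_iUnion.2 ⟨_, hx⟩
  obtain ⟨i₀⟩ : Nonempty ι := inferInstance
  refine ⟨⟨Dq, gq, ?_, ?_, ?_, ?_, ?_, ?_⟩, ?_, rfl⟩
  · exact memq (P i₀).mem_bot
  · rintro x y hx hy
    obtain ⟨_, ⟨i, rfl⟩, hxi⟩ := hx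
    obtain ⟨_, ⟨j, rfl⟩, hyj⟩ := hy
    obtain ⟨k, hk1, hk2⟩ := dir i j
    exact memq ((P k).mem_union (hk1.1 hxi) (hk2.1 hyj))
  · rintro x hx
    obtain ⟨_, ⟨i, rfl⟩, hxi⟩ := hx
    exact memq ((P i).mem_compl hxi)
  · rw [gval (P i₀).mem_bot, (P i₀).map_bot]
  · rintro x y hx hy
    obtain ⟨_, ⟨i, rfl⟩, hxi⟩ := hx
    obtain ⟨_, ⟨j, rfl⟩, hyj⟩ := hy
    obtain ⟨k, hk1, hk2⟩ := dir i j
    rw [gval ((P k).mem_union (hk1.1 hxi) (hk2.1 hyj)), gval (hk1.1 hxi),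
      gval (hk2.1 hyj), (P k).map_union (hk1.1 hxi) (hk2.1 hyj)]
  · rintro x hx
    obtain ⟨_, ⟨i, rfl⟩, hxi⟩ := hx
    rw [gval ((P i).mem_compl hxi), gval hxi, (P i).map_compl hxi]
  · intro i
    exact ⟨fun x hx => memq hx, fun x hx => gval hx⟩

/-- Splitting step: below any element with infinitely many elements below it,
one can split off a nonzero piece keeping infinitely many elements below. -/
lemma split_step (c : B) (h : {x : B | x ≤ c}.Infinite) :
    ∃ d, d ≤ c ∧ c \ d ≠ ⊥ ∧ {x : B | x ≤ d}.Infinite := by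
  obtain ⟨y, hy, hyne⟩ := (h.diff ((Set.finite_singleton c).insert ⊥)).nonempty
  have hyc : y ≤ c := hy
  have hy0 : y ≠ ⊥ := fun h' => hyne (by simp [h'])
  have hyc' : y ≠ c := fun h' => hyne (by simp [h'])
  by_cases hinf : {x : B | x ≤ y}.Infinite
  · refine ⟨y, hyc, ?_, hinf⟩
    intro h'
    exact hyc' (le_antisymm hyc (by rwa [sdiff_eq_bot_iff] at h'))
  · refine ⟨c \ y, sdiff_le, ?_, ?_⟩
    · rw [sdiff_sdiff_right_self, inf_eq_right.2 hyc]
      exact hy0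
    · -- the map x ↦ (x ⊓ y, x ⊓ (c \ y)) is injective on {x | x ≤ c}
      by_contra hinf2
      rw [Set.not_infinite] at hinf hinf2
      apply h
      have : {x : B | x ≤ c} ⊆ (fun z : B × B => z.1 ⊔ z.2) ''
          ({x : B | x ≤ y} ×ˢ {x : B | x ≤ c \ y}) := by
        intro x hx
        refine ⟨⟨x ⊓ y, x ⊓ (c \ y)⟩, ⟨inf_le_right, inf_le_right⟩, ?_⟩
        have : x = (x ⊓ y) ⊔ (x ⊓ (c \ y)) := by
          rw [← inf_sup_left, sup_sdiff_cancel_right hyc, inf_eq_left.2 hx]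
        exact this.symm
      exact ((hinf.prod hinf2).image _).subset this
  
/-- An infinite Boolean algebra contains an infinite pairwise disjoint family
of nonzero elements. -/
lemma exists_disjoint_family [Infinite B] :
    ∃ a : ℕ → B, (∀ n, a n ≠ ⊥) ∧ ∀ m n, m ≠ n → a m ⊓ a n = ⊥ := by
  classical
  have h0 : {x : B | x ≤ (⊤ : B)}.Infinite := by
    simpa [Set.setOf_true] using Set.infinite_univ (α := B)
  -- build the decreasing sequence with its invariant
  let F : {c : B // {x : B | x ≤ c}.Infinite} → {c : B // {x : B | x ≤ c}.Infinite} :=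
    fun c => ⟨(split_step c.1 c.2).choose, (split_step c.1 c.2).choose_spec.2.2⟩
  let C : ℕ → {c : B // {x : B | x ≤ c}.Infinite} := fun n => F^[n] ⟨⊤, h0⟩
  have hCsucc : ∀ n, C (n + 1) = F (C n) := fun n => Function.iterate_succ_apply' F n _
  have hle : ∀ n, (C (n + 1)).1 ≤ (C n).1 := by
    intro n; rw [hCsucc]
    exact (split_step (C n).1 (C n).2).choose_spec.1
  have hne : ∀ n, (C n).1 \ (C (n + 1)).1 ≠ ⊥ := by
    intro n; rw [hCsucc]
    exact (split_step (C n).1 (C n).2).choose_spec.2.1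
  have hmono : ∀ m n, m ≤ n → (C n).1 ≤ (C m).1 := by
    intro m n hmn
    induction n with
    | zero => cases Nat.le_zero.1 hmn; exact le_rfl
    | succ k ih =>
      rcases Nat.lt_or_ge m (k+1) with h | h
      · exact le_trans (hle k) (ih (Nat.lt_succ_iff.1 h))
      · cases le_antisymm hmn h; exact le_rfl
  refine ⟨fun n => (C n).1 \ (C (n + 1)).1, hne, ?_⟩
  have key : ∀ m n, m < n → ((C m).1 \ (C (m+1)).1) ⊓ ((C n).1 \ (C (n+1)).1) = ⊥ := by
    intro m n hmn
    have h1 : (C n).1 ≤ (C (m+1)).1 := hmono _ _ hmn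
    apply le_bot_iff.1
    calc ((C m).1 \ (C (m+1)).1) ⊓ ((C n).1 \ (C (n+1)).1)
        ≤ (C (m+1)).1ᶜ ⊓ (C (m+1)).1 := by
          apply inf_le_inf
          · rw [sdiff_eq]; exact inf_le_right
          · exact le_trans sdiff_le h1
      _ = ⊥ := compl_inf_eq_bot
  intro m n hmn
  rcases Nat.lt_or_ge m n with h | h
  · exact key m n h
  · rw [inf_comm]; exact key n m (lt_of_le_of_ne h (Ne.symm hmn))


/-- The index type of order type `ω₁`. -/
abbrev J1 : Type := (Cardinal.aleph.{0} 1).ord.ToType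

end PowSetEmbedAux

/-- Under CH, every infinite Boolean algebra with no `(ω,ω)`-gaps contains an isomorphic
copy of `P(ω)`, i.e. `P(ω)` embeds into it as a Boolean algebra.  (Equivalently, every
infinite compact zero-dimensional F-space maps continuously onto `βℕ`.) -/
theorem powSet_embeds_of_no_gaps (hCH : Cardinal.continuum = Cardinal.aleph 1)
    (B : Type*) [BooleanAlgebra B] [Infinite B]
    (hnogaps : ∀ S T : Set B, S.Countable → T.Countable →
      (∀ s ∈ S, ∀ t ∈ T, s ⊓ t = ⊥) →
      ∃ b : B, (∀ s ∈ S, s ≤ b) ∧ ∀ t ∈ T, t ⊓ b = ⊥) :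
    ∃ f : BoundedLatticeHom (Set ℕ) B, Function.Injective f := by
  classical
  have hno : PowSetEmbedAux.NoGaps B := hnogaps
  obtain ⟨a, ha0, had⟩ := PowSetEmbedAux.exists_disjoint_family (B := B)
  set p₀ : PowSetEmbedAux.PartHom B := PowSetEmbedAux.base a had with hp₀
  have hCH0 : Cardinal.continuum.{0} = Cardinal.aleph.{0} 1 := by
    apply Cardinal.lift_injective.{_, 0}
    rw [Cardinal.lift_continuum, Cardinal.lift_aleph, Ordinal.lift_one, hCH]
  have countIio : ∀ j : PowSetEmbedAux.J1, (Set.Iio j).Countable := by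
    intro j
    rw [Cardinal.countable_iff_lt_aleph_one]
    exact Cardinal.mk_Iio_ord_toType j
  -- the enumeration of `P(ω)` in order type `ω₁`
  have hcard : Cardinal.mk (Set ℕ) = Cardinal.mk PowSetEmbedAux.J1 := by
    rw [Cardinal.mk_set, Cardinal.mk_nat, Cardinal.two_power_aleph0, hCH0,
      Cardinal.mk_ord_toType]
  obtain ⟨φ⟩ : Nonempty (Set ℕ ≃ PowSetEmbedAux.J1) := Cardinal.eq.1 hcard
  have wf : WellFounded ((· < ·) : PowSetEmbedAux.J1 → PowSetEmbedAux.J1 → Prop) := wellFounded_lt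
  set step : ∀ j : PowSetEmbedAux.J1, (∀ i, i < j → PowSetEmbedAux.PartHom B) → PowSetEmbedAux.PartHom B :=
    fun j prev =>
      if h : ∃ q : PowSetEmbedAux.PartHom B, p₀.le q ∧
          (∀ i (hi : i < j), (prev i hi).le q) ∧ φ.symm j ∈ q.D ∧ q.D.Countable then
        h.choose else p₀
    with hstep
  set G : PowSetEmbedAux.J1 → PowSetEmbedAux.PartHom B := wf.fix step with hGdef
  have hG : ∀ j, G j = step j (fun i _ => G i) := fun j => wf.fix_eq step j
  have spec : ∀ j : PowSetEmbedAux.J1, p₀.le (G j) ∧ (∀ i, i < j → (G i).le (G j)) ∧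
      φ.symm j ∈ (G j).D ∧ (G j).D.Countable := by
    intro j
    refine wf.induction
      (C := fun j => p₀.le (G j) ∧ (∀ i, i < j → (G i).le (G j)) ∧
        φ.symm j ∈ (G j).D ∧ (G j).D.Countable) j ?_
    intro j ih
    -- form the directed union of all previous stages together with the base
    have dir : ∀ o o' : Option {i : PowSetEmbedAux.J1 // i < j},
        ∃ k : Option {i : PowSetEmbedAux.J1 // i < j},
          (Option.elim o p₀ (fun i => G i.1)).le (Option.elim k p₀ (fun i => G i.1)) ∧
          (Option.elim o' p₀ (fun i => G i.1)).le (Option.elim k p₀ (fun i => G i.1)) := by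
      rintro (_ | ⟨i, hi⟩) (_ | ⟨i', hi'⟩)
      · exact ⟨none, PowSetEmbedAux.PartHom.le_refl _, PowSetEmbedAux.PartHom.le_refl _⟩
      · exact ⟨some ⟨i', hi'⟩, (ih i' hi').1, PowSetEmbedAux.PartHom.le_refl _⟩
      · exact ⟨some ⟨i, hi⟩, PowSetEmbedAux.PartHom.le_refl _, (ih i hi).1⟩
      · rcases le_or_gt i i' with h | h
        · rcases eq_or_lt_of_le h with rfl | h
          · exact ⟨some ⟨i, hi⟩, PowSetEmbedAux.PartHom.le_refl _,
              PowSetEmbedAux.PartHom.le_refl _⟩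
          · exact ⟨some ⟨i', hi'⟩, (ih i' hi').2.1 i h, PowSetEmbedAux.PartHom.le_refl _⟩
        · exact ⟨some ⟨i, hi⟩, PowSetEmbedAux.PartHom.le_refl _, (ih i hi).2.1 i' h⟩
    obtain ⟨q0, hq0, hq0D⟩ := PowSetEmbedAux.directed_union
      (ι := Option {i : PowSetEmbedAux.J1 // i < j}) (fun o => Option.elim o p₀ (fun i => G i.1)) dir
    have hq0c : q0.D.Countable := by
      rw [hq0D]
      have : Countable {i : PowSetEmbedAux.J1 // i < j} := (countIio j).to_subtype
      refine Set.countable_iUnion ?_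
      rintro (_ | ⟨i, hi⟩)
      · exact PowSetEmbedAux.base_countable a had
      · exact (ih i hi).2.2.2
    obtain ⟨q, hq, hqA, hqc⟩ := PowSetEmbedAux.extend_step hno q0 hq0c (φ.symm j)
    have hex : ∃ q : PowSetEmbedAux.PartHom B, p₀.le q ∧
        (∀ i (hi : i < j), ((fun i (_ : i < j) => G i) i hi).le q) ∧
        φ.symm j ∈ q.D ∧ q.D.Countable :=
      ⟨q, PowSetEmbedAux.PartHom.le_trans (hq0 none) hq,
        fun i hi => PowSetEmbedAux.PartHom.le_trans (hq0 (some ⟨i, hi⟩)) hq, hqA, hqc⟩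
    have hGj : G j = hex.choose := by
      rw [hG j, hstep]
      exact dif_pos hex
    rw [hGj]
    exact hex.choose_spec
  -- the embedding
  set f : Set ℕ → B := fun A => (G (φ A)).g A with hf
  have key : ∀ (A : Set ℕ) (j : PowSetEmbedAux.J1), φ A ≤ j → A ∈ (G j).D ∧ (G j).g A = f A := by
    intro A j hle
    have hA : A ∈ (G (φ A)).D := by
      have := (spec (φ A)).2.2.1
      rwa [Equiv.symm_apply_apply] at this
    rcases eq_or_lt_of_le hle with heq | hlt
    · rw [← heq]
      exact ⟨hA, rfl⟩
    · have s2 := (spec j).2.1 _ hlt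
      exact ⟨s2.1 hA, s2.2 A hA⟩
  have keyb : ∀ (x : Set ℕ) (j : PowSetEmbedAux.J1), x ∈ p₀.D → x ∈ (G j).D ∧ (G j).g x = p₀.g x := by
    intro x j hx
    exact ⟨(spec j).1.1 hx, (spec j).1.2 x hx⟩
  have hsup : ∀ A₁ A₂ : Set ℕ, f (A₁ ∪ A₂) = f A₁ ⊔ f A₂ := by
    intro A₁ A₂
    set j := max (max (φ A₁) (φ A₂)) (φ (A₁ ∪ A₂)) with hj
    obtain ⟨m1, e1⟩ := key A₁ j (le_trans (le_max_left _ _) (le_max_left _ _))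
    obtain ⟨m2, e2⟩ := key A₂ j (le_trans (le_max_right _ _) (le_max_left _ _))
    obtain ⟨m3, e3⟩ := key (A₁ ∪ A₂) j (le_max_right _ _)
    rw [← e1, ← e2, ← e3, (G j).map_union m1 m2]
  have hinf : ∀ A₁ A₂ : Set ℕ, f (A₁ ∩ A₂) = f A₁ ⊓ f A₂ := by
    intro A₁ A₂
    set j := max (max (φ A₁) (φ A₂)) (φ (A₁ ∩ A₂)) with hj
    obtain ⟨m1, e1⟩ := key A₁ j (le_trans (le_max_left _ _) (le_max_left _ _))
    obtain ⟨m2, e2⟩ := key A₂ j (le_trans (le_max_right _ _) (le_max_left _ _))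
    obtain ⟨m3, e3⟩ := key (A₁ ∩ A₂) j (le_max_right _ _)
    rw [← e1, ← e2, ← e3, (G j).map_inter m1 m2]
  have htop : f Set.univ = ⊤ := (G (φ Set.univ)).map_top
  have hbot : f ∅ = ⊥ := (G (φ ∅)).map_bot
  have hdiffbot : ∀ A₁ A₂ : Set ℕ, f A₁ = f A₂ → A₁ \ A₂ = ∅ := by
    intro A₁ A₂ hfe
    by_contra hne
    obtain ⟨n, hn⟩ := Set.nonempty_iff_ne_empty.2 hne
    set j := max (max (φ A₁) (φ A₂)) (φ (A₁ \ A₂)) with hj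
    obtain ⟨m1, e1⟩ := key A₁ j (le_trans (le_max_left _ _) (le_max_left _ _))
    obtain ⟨m2, e2⟩ := key A₂ j (le_trans (le_max_right _ _) (le_max_left _ _))
    have hd : (G j).g (A₁ \ A₂) = ⊥ := by
      rw [(G j).map_diff m1 m2, e1, e2, hfe, sdiff_self]
    obtain ⟨ms, es⟩ := keyb {n} j (PowSetEmbedAux.base_mem_singleton a had n)
    have hsub : ({n} : Set ℕ) ⊆ A₁ \ A₂ := Set.singleton_subset_iff.2 hn
    have := (G j).mono ms ((G j).mem_diff m1 m2) hsub
    rw [es, hd] at this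
    have : p₀.g {n} = ⊥ := le_bot_iff.1 this
    rw [hp₀, PowSetEmbedAux.base_g_singleton a had n] at this
    exact ha0 n this
  refine ⟨⟨⟨⟨f, fun A₁ A₂ => hsup A₁ A₂⟩, fun A₁ A₂ => hinf A₁ A₂⟩, htop, hbot⟩, ?_⟩
  intro A₁ A₂ h
  have h' : f A₁ = f A₂ := h
  have e1 := Set.diff_eq_empty.1 (hdiffbot A₁ A₂ h')
  have e2 := Set.diff_eq_empty.1 (hdiffbot A₂ A₁ h'.symm)
  exact Set.Subset.antisymm e1 e2
end

section
/- Under CH, for every point u of ℕ* = βℕ∖ℕ, the space ℕ*∖{u} can be partitioned into two disjoint open sets each of which has u in its closure; in particular ℕ*∖{u} is not C*-embedded in ℕ*. -/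
/-!
Points of `ℕ*` are the free ultrafilters on `ℕ`. Under CH the sets `B ∉ u` can be listed as
`(B i)_{i < ω₁}`, and a transfinite recursion produces sets `A i, C i ∉ u` with every `A i ∩ C j`
finite, `B i ⊆ A i ∪ C i`, and `A i \ B i`, `C i \ B i` infinite. Each stage only has to respect
countably many earlier sets, which is possible because two countable families whose members meet
in finite sets can be separated by a single set. The points containing some `A i`, resp. some
`C i`, form disjoint open sets `U`, `V` covering `ℕ* ∖ {u}`, and both accumulate at `u` since every
`E ∈ u` has infinite intersection with some `A i` and some `C i`. The indicator of `U` is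
continuous on `ℕ* ∖ {u}` and has no continuous extension to `u`.
-/

/-- The Čech–Stone remainder `ℕ* = βℕ ∖ ℕ`. -/
def NStar : Type := {x : StoneCech ℕ // x ∉ Set.range (stoneCechUnit : ℕ → StoneCech ℕ)}

instance : TopologicalSpace NStar :=
  instTopologicalSpaceSubtype

open Set Filter

theorem exists_separating_of_finite_inter_seq {α : Type*} {a c : ℕ → Set α}
    (h : ∀ m n, (a m ∩ c n).Finite) :
    ∃ S, (∀ k, (a k ∩ S).Finite) ∧ ∀ k, (c k \ S).Finite := by
  refine ⟨⋃ n, c n \ ⋃ j ≤ n, a j, fun k => ?_, fun k => ?_⟩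
  · refine ((finite_Iio k).biUnion fun n _ => h k n).subset ?_
    rintro y ⟨hya, hyS⟩
    obtain ⟨n, hyc, hyn⟩ := mem_iUnion.1 hyS
    have hnk : n < k := lt_of_not_ge fun hkn => hyn (mem_iUnion₂.2 ⟨k, hkn, hya⟩)
    exact mem_iUnion₂.2 ⟨n, hnk, hya, hyc⟩
  · refine ((finite_Iic k).biUnion fun j _ => h j k).subset ?_
    rintro y ⟨hyc, hyS⟩
    by_contra hy
    refine hyS (mem_iUnion.2 ⟨k, hyc, fun hya => hy ?_⟩)
    obtain ⟨j, hjk, hyj⟩ := mem_iUnion₂.1 hya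
    exact mem_iUnion₂.2 ⟨j, hjk, hyj, hyc⟩

theorem Set.Countable.exists_separating_of_finite_inter {α : Type*} {𝒜 𝒞 : Set (Set α)}
    (h𝒜 : 𝒜.Countable) (h𝒞 : 𝒞.Countable) (h : ∀ a ∈ 𝒜, ∀ c ∈ 𝒞, (a ∩ c).Finite) :
    ∃ S, (∀ a ∈ 𝒜, (a ∩ S).Finite) ∧ ∀ c ∈ 𝒞, (c \ S).Finite := by
  obtain ⟨a, ha⟩ := (h𝒜.insert ∅).exists_eq_range (insert_nonempty _ _)
  obtain ⟨c, hc⟩ := (h𝒞.insert ∅).exists_eq_range (insert_nonempty _ _)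
  have hac : ∀ m n, (a m ∩ c n).Finite := fun m n => by
    rcases (ha ▸ mem_range_self m : a m ∈ insert ∅ 𝒜) with ham | ham
    · simp [ham]
    rcases (hc ▸ mem_range_self n : c n ∈ insert ∅ 𝒞) with hcn | hcn
    · simp [hcn]
    exact h _ ham _ hcn
  obtain ⟨S, haS, hcS⟩ := exists_separating_of_finite_inter_seq hac
  refine ⟨S, fun s hs => ?_, fun s hs => ?_⟩
  · obtain ⟨m, rfl⟩ : s ∈ range a := ha ▸ mem_insert_of_mem _ hs
    exact haS m
  · obtain ⟨n, rfl⟩ : s ∈ range c := hc ▸ mem_insert_of_mem _ hs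
    exact hcS n

theorem WellFoundedLT.exists_forall_of_forall_extend {ι α : Type*} [LT ι] [WellFoundedLT ι]
    [Nonempty α] (P : ι → α → Prop) (R : ι → α → ι → α → Prop)
    (h : ∀ i (f : ι → α), (∀ j < i, P j (f j) ∧ ∀ k < j, R j (f j) k (f k)) →
      ∃ x, P i x ∧ ∀ j < i, R i x j (f j)) :
    ∃ f : ι → α, ∀ i, P i (f i) ∧ ∀ j < i, R i (f i) j (f j) := by
  let f : ι → α := wellFounded_lt.fix fun i g =>
    Classical.epsilon fun x => P i x ∧ ∀ j (hj : j < i), R i x j (g j hj)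
  refine ⟨f, fun i => ?_⟩
  induction i using WellFoundedLT.induction with | ind i ih
  rw [show f i = _ from wellFounded_lt.fix_eq _ i]
  exact Classical.epsilon_spec (h i f ih)

theorem finite_inter_of_forall_lt {ι α : Type*} [LinearOrder ι] {A C : ι → Set α} {s : Set ι}
    (hd : ∀ i ∈ s, Disjoint (A i) (C i))
    (h : ∀ i ∈ s, ∀ j ∈ s, j < i → (A i ∩ C j).Finite ∧ (A j ∩ C i).Finite)
    {i j : ι} (hi : i ∈ s) (hj : j ∈ s) : (A i ∩ C j).Finite := by
  rcases lt_trichotomy i j with hij | rfl | hij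
  · exact (h j hj i hi hij).2
  · simp [(hd i hi).inter_eq]
  · exact (h i hi j hj hij).1

namespace Ultrafilter

theorem infinite_of_mem_of_le_cofinite {α : Type*} {u : Ultrafilter α}
    (hu : (u : Filter α) ≤ cofinite) {s : Set α} (hs : s ∈ u) : s.Infinite :=
  fun hfin => u.compl_notMem_iff.2 hs (hu hfin.compl_mem_cofinite)

theorem exists_infinite_subset_notMem {α : Type*} (u : Ultrafilter α) {s : Set α}
    (hs : s.Infinite) : ∃ t ⊆ s, t.Infinite ∧ t ∉ u := by
  obtain ⟨t, t', rfl, hdisj, hcard⟩ := hs.exists_union_disjoint_cardinal_eq_of_infinite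
  have ht : t.Infinite ↔ t'.Infinite := by
    simp only [← Set.infinite_coe_iff, Cardinal.infinite_iff, hcard]
  have ht' : t'.Infinite := (Set.infinite_union.1 hs).elim ht.1 id
  by_cases h : t ∈ u
  · exact ⟨t', subset_union_right, ht', fun h' => u.compl_notMem_iff.2 h
      (mem_of_superset h' hdisj.subset_compl_left)⟩
  · exact ⟨t, subset_union_left, ht.2 ht', h⟩

variable {u : Ultrafilter ℕ}

theorem exists_infinite_notMem_finite_inter (hu : (u : Filter ℕ) ≤ cofinite)
    {𝒞 : Set (Set ℕ)} (h𝒞 : 𝒞.Countable) (h𝒞u : ∀ c ∈ 𝒞, c ∉ u) {E : Set ℕ} (hE : E ∈ u) :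
    ∃ F ⊆ E, F.Infinite ∧ F ∉ u ∧ ∀ c ∈ 𝒞, (F ∩ c).Finite := by
  obtain ⟨c, hc⟩ := (h𝒞.insert ∅).exists_eq_range (insert_nonempty _ _)
  have hcu : ∀ n, c n ∉ u := fun n => by
    rcases (hc ▸ mem_range_self n : c n ∈ insert ∅ 𝒞) with hcn | hcn
    · exact hcn ▸ u.empty_notMem
    · exact h𝒞u _ hcn
  have hS : ∀ n, E ∩ ⋂ j ≤ n, (c j)ᶜ ∈ u := fun n =>
    inter_mem hE <| (biInter_mem (finite_Iic n)).2 fun j _ => compl_mem_iff_notMem.2 (hcu j)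
  obtain ⟨x, hx, hxS⟩ := extraction_forall_of_frequently fun n =>
    Nat.frequently_atTop_iff_infinite.2 (infinite_of_mem_of_le_cofinite hu (hS n))
  obtain ⟨F, hFx, hF, hFu⟩ :=
    u.exists_infinite_subset_notMem (infinite_range_of_injective hx.injective)
  refine ⟨F, hFx.trans (range_subset_iff.2 fun n => (hxS n).1), hF, hFu, fun d hd => ?_⟩
  obtain ⟨k, rfl⟩ : d ∈ range c := hc ▸ mem_insert_of_mem _ hd
  refine ((finite_Iio k).image x).subset ?_
  rintro _ ⟨hyF, hyc⟩
  obtain ⟨n, rfl⟩ := hFx hyF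
  exact ⟨n, lt_of_not_ge fun hkn => mem_iInter₂.1 (hxS n).2 k hkn hyc, rfl⟩

theorem exists_finite_inter_cover_step (hu : (u : Filter ℕ) ≤ cofinite) {𝒜 𝒞 : Set (Set ℕ)}
    (h𝒜 : 𝒜.Countable) (h𝒞 : 𝒞.Countable) (h𝒜u : ∀ a ∈ 𝒜, a ∉ u) (h𝒞u : ∀ c ∈ 𝒞, c ∉ u)
    (h𝒜𝒞 : ∀ a ∈ 𝒜, ∀ c ∈ 𝒞, (a ∩ c).Finite) {B : Set ℕ} (hB : B ∉ u) :
    ∃ A C : Set ℕ, A ∉ u ∧ C ∉ u ∧ Disjoint A C ∧ B ⊆ A ∪ C ∧ (A \ B).Infinite ∧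
      (C \ B).Infinite ∧ (∀ c ∈ 𝒞, (A ∩ c).Finite) ∧ ∀ a ∈ 𝒜, (a ∩ C).Finite := by
  obtain ⟨S, haS, hcS⟩ := h𝒜.exists_separating_of_finite_inter h𝒞 h𝒜𝒞
  obtain ⟨F₁, hF₁B, hF₁, hF₁u, hF₁c⟩ :=
    exists_infinite_notMem_finite_inter hu h𝒞 h𝒞u (compl_mem_iff_notMem.2 hB)
  have hBF₁ : B ∪ F₁ ∉ u := by simp [union_mem_iff, hB, hF₁u]
  obtain ⟨F₂, hF₂BF₁, hF₂, hF₂u, hF₂a⟩ :=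
    exists_infinite_notMem_finite_inter hu h𝒜 h𝒜u (compl_mem_iff_notMem.2 hBF₁)
  refine ⟨B \ S ∪ F₁, B ∩ S ∪ F₂, ?_, ?_, ?_, ?_, ?_, ?_, ?_, ?_⟩
  · rw [union_mem_iff, not_or]
    exact ⟨fun h => hB (mem_of_superset h sdiff_subset), hF₁u⟩
  · rw [union_mem_iff, not_or]
    exact ⟨fun h => hB (mem_of_superset h inter_subset_left), hF₂u⟩
  · rw [Set.disjoint_left]
    rintro x (⟨hxB, hxS⟩ | hx₁) (⟨hxB', hxS'⟩ | hx₂)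
    · exact hxS hxS'
    · exact hF₂BF₁ hx₂ (Or.inl hxB)
    · exact hF₁B hx₁ hxB'
    · exact hF₂BF₁ hx₂ (Or.inr hx₁)
  · intro x hx
    by_cases hxS : x ∈ S
    · exact Or.inr (Or.inl ⟨hx, hxS⟩)
    · exact Or.inl (Or.inl ⟨hx, hxS⟩)
  · exact hF₁.mono fun x hx => ⟨Or.inr hx, hF₁B hx⟩
  · exact hF₂.mono fun x hx => ⟨Or.inr hx, fun hxB => hF₂BF₁ hx (Or.inl hxB)⟩
  · intro c hc
    refine ((hcS c hc).union (hF₁c c hc)).subset ?_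
    rintro x ⟨⟨hxB, hxS⟩ | hx₁, hxc⟩
    exacts [Or.inl ⟨hxc, hxS⟩, Or.inr ⟨hx₁, hxc⟩]
  · intro a ha
    refine ((haS a ha).union (hF₂a a ha)).subset ?_
    rintro x ⟨hxa, ⟨-, hxS⟩ | hx₂⟩
    exacts [Or.inl ⟨hxa, hxS⟩, Or.inr ⟨hx₂, hxa⟩]

theorem exists_finite_inter_cover {ι : Type*} [LinearOrder ι] [WellFoundedLT ι]
    (hι : ∀ i : ι, (Iio i).Countable) (hu : (u : Filter ℕ) ≤ cofinite) (B : ι → Set ℕ)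
    (hB : ∀ i, B i ∉ u) :
    ∃ A C : ι → Set ℕ, (∀ i, A i ∉ u) ∧ (∀ i, C i ∉ u) ∧ (∀ i j, (A i ∩ C j).Finite) ∧
      ∀ i, B i ⊆ A i ∪ C i ∧ (A i \ B i).Infinite ∧ (C i \ B i).Infinite := by
  obtain ⟨p, hp⟩ := WellFoundedLT.exists_forall_of_forall_extend (α := Set ℕ × Set ℕ)
    (fun i p => p.1 ∉ u ∧ p.2 ∉ u ∧ Disjoint p.1 p.2 ∧
      B i ⊆ p.1 ∪ p.2 ∧ (p.1 \ B i).Infinite ∧ (p.2 \ B i).Infinite)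
    (fun _ p _ q => (p.1 ∩ q.2).Finite ∧ (q.1 ∩ p.2).Finite) fun i f hf => by
      obtain ⟨A, C, hA, hC, hAC, hBAC, hAB, hCB, hAc, haC⟩ :=
        exists_finite_inter_cover_step hu
          ((hι i).image fun j => (f j).1) ((hι i).image fun j => (f j).2)
          (by rintro _ ⟨j, hj, rfl⟩; exact (hf j hj).1.1)
          (by rintro _ ⟨j, hj, rfl⟩; exact (hf j hj).1.2.1)
          (by
            rintro _ ⟨j, hj, rfl⟩ _ ⟨k, hk, rfl⟩
            exact finite_inter_of_forall_lt (A := fun j => (f j).1) (C := fun j => (f j).2)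
              (fun j hj => (hf j hj).1.2.2.1) (fun j hj k _ hkj => (hf j hj).2 k hkj) hj hk)
          (hB i)
      exact ⟨(A, C), ⟨hA, hC, hAC, hBAC, hAB, hCB⟩, fun j hj =>
        ⟨hAc _ (mem_image_of_mem _ hj), haC _ (mem_image_of_mem _ hj)⟩⟩
  refine ⟨fun i => (p i).1, fun i => (p i).2, fun i => (hp i).1.1, fun i => (hp i).1.2.1,
    fun i j => finite_inter_of_forall_lt (s := univ) (fun i _ => (hp i).1.2.2.1)
      (fun i _ j _ hji => (hp i).2 j hji) trivial trivial, fun i => (hp i).1.2.2.2⟩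

theorem exists_finite_inter_cover_of_continuum_eq_aleph_one
    (hCH : Cardinal.continuum.{v} = Cardinal.aleph 1) (hu : (u : Filter ℕ) ≤ cofinite) :
    ∃ (ι : Type v) (A C : ι → Set ℕ), (∀ i, A i ∉ u) ∧ (∀ i, C i ∉ u) ∧
      (∀ i j, (A i ∩ C j).Finite) ∧
      ∀ B ∉ u, ∃ i, B ⊆ A i ∪ C i ∧ (A i \ B).Infinite ∧ (C i \ B).Infinite := by
  classical
  let ι := (Cardinal.aleph.{v} 1).ord.ToType
  have hι (i : ι) : (Iio i).Countable := by
    have h := Cardinal.mk_Iio_lt i (by simp [ι])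
    rw [Cardinal.mk_toType, Cardinal.card_ord] at h
    exact Cardinal.le_aleph0_iff_set_countable.1 (Cardinal.lt_aleph_one_iff.1 h)
  obtain ⟨e⟩ : Nonempty (ι ≃ Set ℕ) := by
    rw [← Cardinal.lift_mk_eq'.{v, 0}]
    simp [ι, ← hCH]
  let B i := if e i ∈ u then ∅ else e i
  obtain ⟨A, C, hA, hC, hAC, hBAC⟩ := exists_finite_inter_cover hι hu B
    fun i => by by_cases h : e i ∈ u <;> simp [B, h]
  refine ⟨ι, A, C, hA, hC, hAC, fun D hD => ⟨e.symm D, ?_⟩⟩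
  simpa [B, hD] using hBAC (e.symm D)

end Ultrafilter

noncomputable def stoneCechHomeomorphUltrafilter (α : Type*) [TopologicalSpace α]
    [DiscreteTopology α] : StoneCech α ≃ₜ Ultrafilter α where
  toFun := stoneCechExtend (continuous_of_discreteTopology (f := (pure : α → Ultrafilter α)))
  invFun F := T2Quotient.mk (Quot.mk _ F : PreStoneCech α)
  left_inv := congrFun <| stoneCech_hom_ext
    ((T2Quotient.continuous_mk _).comp (continuous_quot_mk.comp (continuous_stoneCechExtend _)))
    continuous_id <| funext fun a => by
      simp only [Function.comp_apply, stoneCechExtend_stoneCechUnit]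
      rfl
  right_inv := congrFun <| ((continuous_stoneCechExtend _).comp
    ((T2Quotient.continuous_mk _).comp continuous_quot_mk)).ext_on denseRange_pure continuous_id
    (by rintro _ ⟨a, rfl⟩; exact stoneCechExtend_stoneCechUnit _ a)
  continuous_toFun := continuous_stoneCechExtend _
  continuous_invFun := (T2Quotient.continuous_mk _).comp continuous_quot_mk

@[simp]
theorem stoneCechHomeomorphUltrafilter_stoneCechUnit {α : Type*} [TopologicalSpace α]
    [DiscreteTopology α] (a : α) :
    stoneCechHomeomorphUltrafilter α (stoneCechUnit a) = pure a :=
  stoneCechExtend_stoneCechUnit continuous_of_discreteTopology a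

namespace NStar

noncomputable def toUltrafilter (x : NStar) : Ultrafilter ℕ :=
  stoneCechHomeomorphUltrafilter ℕ x.1

theorem isEmbedding_toUltrafilter : Topology.IsEmbedding toUltrafilter :=
  (stoneCechHomeomorphUltrafilter ℕ).isEmbedding.comp .subtypeVal

theorem range_toUltrafilter :
    range toUltrafilter = {F : Ultrafilter ℕ | (F : Filter ℕ) ≤ cofinite} := by
  set e := stoneCechHomeomorphUltrafilter ℕ
  ext F
  constructor
  · rintro ⟨x, rfl⟩
    refine (toUltrafilter x).le_cofinite_or_eq_pure.resolve_right ?_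
    rintro ⟨a, ha⟩
    exact x.2 ⟨a, e.injective (by simpa [e, toUltrafilter] using ha.symm)⟩
  · intro hF
    refine ⟨⟨e.symm F, ?_⟩, e.apply_symm_apply F⟩
    rintro ⟨a, ha⟩
    have hFa : F = pure a := by
      rw [← e.apply_symm_apply F, ← ha, stoneCechHomeomorphUltrafilter_stoneCechUnit]
    have : {a}ᶜ ∈ F := hF (finite_singleton a).compl_mem_cofinite
    rw [hFa, Ultrafilter.mem_pure] at this
    exact this rfl

theorem toUltrafilter_le_cofinite (x : NStar) : (x.toUltrafilter : Filter ℕ) ≤ cofinite :=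
  range_toUltrafilter.subset (mem_range_self x)

theorem mem_closure_iff {u : NStar} {S : Set NStar} :
    u ∈ closure S ↔ ∀ E ∈ u.toUltrafilter, ∃ x ∈ S, E ∈ x.toUltrafilter := by
  rw [isEmbedding_toUltrafilter.closure_eq_preimage_closure_image, mem_preimage,
    ultrafilterBasis_is_basis.mem_closure_iff]
  simp [ultrafilterBasis, Set.Nonempty, and_comm]

theorem exists_mem_toUltrafilter {D : Set ℕ} (hD : D.Infinite) :
    ∃ x : NStar, D ∈ x.toUltrafilter := by
  have := hD.cofinite_inf_principal_neBot
  obtain ⟨x, hx⟩ : Ultrafilter.of (cofinite ⊓ 𝓟 D) ∈ range toUltrafilter :=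
    range_toUltrafilter ▸ (Ultrafilter.of_le _).trans inf_le_left
  exact ⟨x, hx ▸ Ultrafilter.of_le _ (mem_inf_of_right (mem_principal_self D))⟩

theorem mem_closure_iUnion_setOf_mem {ι : Type*} {A : ι → Set ℕ} {u : NStar}
    (h : ∀ E ∈ u.toUltrafilter, ∃ i, (A i ∩ E).Infinite) :
    u ∈ closure (⋃ i, {x : NStar | A i ∈ x.toUltrafilter}) :=
  mem_closure_iff.2 fun E hE => by
    obtain ⟨i, hi⟩ := h E hE
    obtain ⟨x, hx⟩ := exists_mem_toUltrafilter hi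
    exact ⟨x, mem_iUnion.2 ⟨i, mem_of_superset hx inter_subset_left⟩,
      mem_of_superset hx inter_subset_right⟩

theorem exists_partition_compl_singleton (u : NStar) {ι : Type*} {A C : ι → Set ℕ}
    (hA : ∀ i, A i ∉ u.toUltrafilter) (hC : ∀ i, C i ∉ u.toUltrafilter)
    (hAC : ∀ i j, (A i ∩ C j).Finite)
    (hcover : ∀ B ∉ u.toUltrafilter,
      ∃ i, B ⊆ A i ∪ C i ∧ (A i \ B).Infinite ∧ (C i \ B).Infinite) :
    ∃ U V : Set NStar, IsOpen U ∧ IsOpen V ∧ Disjoint U V ∧ U ∪ V = {u}ᶜ ∧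
      u ∈ closure U ∧ u ∈ closure V := by
  have hopen (D : ι → Set ℕ) : IsOpen (⋃ i, {x : NStar | D i ∈ x.toUltrafilter}) :=
    isOpen_iUnion fun i =>
      (ultrafilter_isOpen_basic _).preimage isEmbedding_toUltrafilter.continuous
  refine ⟨_, _, hopen A, hopen C, ?_, ?_, mem_closure_iUnion_setOf_mem fun E hE => ?_,
    mem_closure_iUnion_setOf_mem fun E hE => ?_⟩
  · rw [Set.disjoint_left]
    rintro x hxA hxC
    obtain ⟨i, hi⟩ := mem_iUnion.1 hxA
    obtain ⟨j, hj⟩ := mem_iUnion.1 hxC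
    exact Ultrafilter.infinite_of_mem_of_le_cofinite x.toUltrafilter_le_cofinite
      (inter_mem hi hj) (hAC i j)
  · ext x
    simp only [mem_union, mem_iUnion, mem_ofPred_eq, mem_compl_iff, mem_singleton_iff]
    constructor
    · rintro (⟨i, hi⟩ | ⟨i, hi⟩) rfl
      exacts [hA i hi, hC i hi]
    · intro hxu
      obtain ⟨B, hBx, hBu⟩ : ∃ B ∈ x.toUltrafilter, B ∉ u.toUltrafilter := by
        by_contra! h
        exact hxu (isEmbedding_toUltrafilter.injective (Ultrafilter.eq_of_le h)).symm
      obtain ⟨i, hi, -⟩ := hcover B hBu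
      exact (Ultrafilter.union_mem_iff.1 (mem_of_superset hBx hi)).imp (⟨i, ·⟩) (⟨i, ·⟩)
  · obtain ⟨i, -, hi, -⟩ := hcover Eᶜ (Ultrafilter.compl_notMem_iff.2 hE)
    exact ⟨i, by rwa [sdiff_compl] at hi⟩
  · obtain ⟨i, -, -, hi⟩ := hcover Eᶜ (Ultrafilter.compl_notMem_iff.2 hE)
    exact ⟨i, by rwa [sdiff_compl] at hi⟩

end NStar

theorem exists_continuousOn_compl_singleton_not_extend {X : Type*} [TopologicalSpace X]
    {u : X} {U V : Set X} (hU : IsOpen U) (hV : IsOpen V) (hUV : Disjoint U V)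
    (hUVu : U ∪ V = {u}ᶜ) (huU : u ∈ closure U) (huV : u ∈ closure V) :
    ∃ f : X → ℝ, ContinuousOn f {u}ᶜ ∧ (∀ x, |f x| ≤ 1) ∧
      ¬ ∃ g : X → ℝ, Continuous g ∧ ∀ x ∈ ({u}ᶜ : Set X), g x = f x := by
  refine ⟨U.indicator 1, ?_, fun x => ?_, ?_⟩
  · rw [← hUVu]
    rintro x (hx | hx)
    · exact (continuousAt_const.congr (eventuallyEq_of_mem (hU.mem_nhds hx)
        fun y hy => (indicator_of_mem hy _).symm)).continuousWithinAt
    · exact (continuousAt_const.congr (eventuallyEq_of_mem (hV.mem_nhds hx)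
        fun y hy => (indicator_of_notMem (hUV.notMem_of_mem_right hy) _).symm)).continuousWithinAt
  · by_cases hx : x ∈ U <;> simp [hx]
  · rintro ⟨g, hg, hgf⟩
    have hU1 : g u = 1 := by
      simpa using map_mem_closure hg huU (t := {1}) fun x hx => by
        simp [hgf x (hUVu ▸ Or.inl hx), hx]
    have hV0 : g u = 0 := by
      simpa using map_mem_closure hg huV (t := {0}) fun x hx => by
        simp [hgf x (hUVu ▸ Or.inr hx), hUV.notMem_of_mem_right hx]
    exact one_ne_zero (hU1.symm.trans hV0)

/-- Gillman's theorem (under CH): for every `u ∈ ℕ*` the space `ℕ* ∖ {u}` can be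
partitioned into two disjoint relatively open sets each having `u` in its closure; in
particular `ℕ* ∖ {u}` is not C*-embedded in `ℕ*`. -/
theorem nstar_minus_point_partition (hCH : Cardinal.continuum = Cardinal.aleph 1)
    (u : NStar) :
    (∃ U V : Set NStar,
      (∃ U₀ : Set NStar, IsOpen U₀ ∧ U = U₀ \ {u}) ∧
      (∃ V₀ : Set NStar, IsOpen V₀ ∧ V = V₀ \ {u}) ∧
      Disjoint U V ∧ U ∪ V = {u}ᶜ ∧ u ∈ closure U ∧ u ∈ closure V) ∧
    ∃ f : NStar → ℝ, ContinuousOn f {u}ᶜ ∧ (∀ x, |f x| ≤ 1) ∧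
      ¬ ∃ g : NStar → ℝ, Continuous g ∧ ∀ x ∈ ({u}ᶜ : Set NStar), g x = f x := by
  obtain ⟨ι, A, C, hA, hC, hAC, hcover⟩ :=
    Ultrafilter.exists_finite_inter_cover_of_continuum_eq_aleph_one hCH
      u.toUltrafilter_le_cofinite
  obtain ⟨U, V, hU, hV, hUV, hUVu, huU, huV⟩ :=
    u.exists_partition_compl_singleton hA hC hAC hcover
  have hsdiff {W : Set NStar} (hW : W ⊆ U ∪ V) : W = W \ {u} :=
    (sdiff_singleton_eq_self fun hu => (hUVu ▸ hW hu : u ∈ ({u}ᶜ : Set NStar)) rfl).symm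
  exact ⟨⟨U, V, ⟨U, hU, hsdiff subset_union_left⟩, ⟨V, hV, hsdiff subset_union_right⟩,
    hUV, hUVu, huU, huV⟩, exists_continuousOn_compl_singleton_not_extend hU hV hUV hUVu huU huV⟩
end
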